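/- arXiv:1407.3990 — 6 statements merged into one kernel-verified Lean document; each statement's English description precedes it below -/
import Mathlib

section
/- Let Γ be a connected finite simple graph on n vertices with Laplacian eigenvalues 0 = λ_1 < λ_2 ≤ … ≤ λ_n and a corresponding orthonormal basis of eigenvectors v_1 = n^{−1/2}·1_n, v_2, …, v_n. Then there exists δ_0 > 0 such that for every 0 < δ ≤ δ_0 and every c_1 ∈ ℝ, c_2, …, c_n ∈ ℝ: (i) if Σ_{i=2}^n λ_i c_i² = δ²/(2π)², then Φ(c_1 v_1 + Σ_{i=2}^n c_i v_i) ≤ δ²; and (ii) if Σ_{i=2}^n λ_i c_i² = 4δ²/(2π)², then Φ(c_1 v_1 + Σ_{i=2}^n c_i v_i) ≥ 2δ² (Lemma 4.1). -/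
-- quadratic form identity
lemma quad_eq (n : ℕ) (G : SimpleGraph (Fin n)) [DecidableRel G.Adj]
    (L : Matrix (Fin n) (Fin n) ℝ)
    (hL : ∀ a b : Fin n,
      L a b = (if a = b then (G.degree a : ℝ) else 0) - (if G.Adj a b then 1 else 0))
    (θ : Fin n → ℝ) :
    (∑ k : Fin n, ∑ j : Fin n, if G.Adj k j then (θ k - θ j) ^ 2 else 0)
      = 2 * ∑ k : Fin n, θ k * L.mulVec θ k := by
  have hdeg : ∀ k : Fin n, (G.degree k : ℝ) = ∑ j, (if G.Adj k j then (1:ℝ) else 0) := by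
    intro k
    rw [Finset.sum_boole]
    norm_num [SimpleGraph.degree, SimpleGraph.neighborFinset_eq_filter]
  have hterm : ∀ k : Fin n, θ k * L.mulVec θ k
      = ∑ j, if G.Adj k j then θ k * (θ k - θ j) else 0 := by
    intro k
    have h1 : L.mulVec θ k = ∑ j, L k j * θ j := by
      simp [Matrix.mulVec, dotProduct]
    rw [h1]
    simp only [hL, sub_mul]
    rw [Finset.sum_sub_distrib]
    have h2 : (∑ j, (if k = j then (G.degree k : ℝ) else 0) * θ j) = (G.degree k : ℝ) * θ k := by
      rw [Finset.sum_congr rfl (fun j _ => by rw [ite_mul, zero_mul]), Finset.sum_ite_eq]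
      simp
    rw [h2, hdeg k]
    simp only [Finset.sum_mul, mul_sub, Finset.mul_sum]
    rw [← Finset.sum_sub_distrib]
    exact Finset.sum_congr rfl fun j _ => by split <;> ring
  have hswap : (∑ k : Fin n, ∑ j : Fin n, if G.Adj k j then θ k * (θ k - θ j) else 0)
      = ∑ k : Fin n, ∑ j : Fin n, if G.Adj k j then θ j * (θ j - θ k) else 0 := by
    rw [Finset.sum_comm]
    exact Finset.sum_congr rfl fun k _ => Finset.sum_congr rfl fun j _ =>
      if_congr (G.adj_comm _ _) rfl rfl
  calc (∑ k : Fin n, ∑ j : Fin n, if G.Adj k j then (θ k - θ j) ^ 2 else 0)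
      = ∑ k : Fin n, ∑ j : Fin n, ((if G.Adj k j then θ k * (θ k - θ j) else 0)
          + (if G.Adj k j then θ j * (θ j - θ k) else 0)) := by
        exact Finset.sum_congr rfl fun k _ => Finset.sum_congr rfl fun j _ => by
          split <;> ring
    _ = (∑ k : Fin n, ∑ j : Fin n, if G.Adj k j then θ k * (θ k - θ j) else 0)
          + ∑ k : Fin n, ∑ j : Fin n, if G.Adj k j then θ j * (θ j - θ k) else 0 := by
        simp [Finset.sum_add_distrib]
    _ = 2 * ∑ k : Fin n, θ k * L.mulVec θ k := by
        rw [← hswap]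
        simp only [hterm]
        ring

lemma ip_eq (n : ℕ) (L : Matrix (Fin n) (Fin n) ℝ)
    (lam : Fin n → ℝ) (v : Fin n → Fin n → ℝ)
    (hortho : ∀ i j : Fin n, (∑ k : Fin n, v i k * v j k) = if i = j then 1 else 0)
    (heig : ∀ i : Fin n, L.mulVec (v i) = lam i • v i)
    (cc : Fin n → ℝ) (θ : Fin n → ℝ) (hθ : θ = fun k => ∑ i, cc i * v i k) :
    ∑ k : Fin n, θ k * L.mulVec θ k = ∑ i, lam i * cc i ^ 2 := by
  have hθ' : θ = ∑ i, cc i • v i := by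
    ext k; simp [hθ, Finset.sum_apply]
  have hw : L.mulVec θ = fun k => ∑ j, cc j * (lam j * v j k) := by
    rw [hθ']
    have h1 : L.mulVec (∑ i, cc i • v i) = ∑ i, L.mulVec (cc i • v i) := by
      have h0 := map_sum L.mulVecLin (fun i => cc i • v i) Finset.univ
      simp only [Matrix.mulVecLin_apply] at h0
      exact h0
    ext k
    rw [h1]
    simp [Matrix.mulVec_smul, heig, Finset.sum_apply, mul_assoc]
  rw [hw, hθ]
  calc ∑ k : Fin n, (∑ i, cc i * v i k) * (∑ j, cc j * (lam j * v j k))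
      = ∑ k : Fin n, ∑ i, ∑ j, (cc i * (cc j * lam j)) * (v i k * v j k) := by
        exact Finset.sum_congr rfl fun k _ => by
          rw [Finset.sum_mul_sum]
          exact Finset.sum_congr rfl fun i _ => Finset.sum_congr rfl fun j _ => by ring
    _ = ∑ i, ∑ j, (cc i * (cc j * lam j)) * ∑ k : Fin n, v i k * v j k := by
        rw [Finset.sum_comm]
        exact Finset.sum_congr rfl fun i _ => by
          rw [Finset.sum_comm]
          exact Finset.sum_congr rfl fun j _ => by rw [← Finset.mul_sum]
    _ = ∑ i, lam i * cc i ^ 2 := by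
        simp only [hortho, mul_ite, mul_one, mul_zero]
        rw [Finset.sum_congr rfl fun i _ => Finset.sum_ite_eq Finset.univ i
          (fun j => cc i * (cc j * lam j))]
        simp
        exact Finset.sum_congr rfl fun i _ => by ring

lemma one_sub_cos_ge_quarter (x : ℝ) (hx : |x| ≤ 1) : x ^ 2 / 4 ≤ 1 - Real.cos x := by
  have hb := Real.cos_bound hx
  have h4 : |x| ^ 4 = x ^ 4 := by rw [← abs_pow]; exact abs_of_nonneg (by positivity)
  have hx2 : x ^ 2 ≤ 1 := by nlinarith [sq_abs x, abs_nonneg x]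
  have := abs_le.mp hb
  nlinarith [sq_nonneg x, sq_nonneg (x ^ 2)]

/-- Lemma 4.1: level-set estimates for
`Φ(θ) = 2 ∑_{kj∈E} (1 - cos(2π(θ_k - θ_j)))` near the synchronization subspace, in
terms of an orthonormal eigenbasis `v_1 = n^{-1/2} 1_n, v_2, …, v_n` of the Laplacian
of a connected graph with eigenvalues `0 = λ_1 < λ_2 ≤ … ≤ λ_n`. -/
theorem level_set_estimates_for_Phi
    (n : ℕ) (hn : 0 < n) (G : SimpleGraph (Fin n)) [DecidableRel G.Adj]
    (hconn : G.Connected)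
    (L : Matrix (Fin n) (Fin n) ℝ)
    (hL : ∀ a b : Fin n,
      L a b = (if a = b then (G.degree a : ℝ) else 0) - (if G.Adj a b then 1 else 0))
    (Φ : (Fin n → ℝ) → ℝ)
    (hΦ : ∀ θ : Fin n → ℝ, Φ θ = ∑ k : Fin n, ∑ j : Fin n,
      (if G.Adj k j then 1 - Real.cos (2 * Real.pi * (θ k - θ j)) else 0))
    (lam : Fin n → ℝ) (v : Fin n → Fin n → ℝ)
    (hlam0 : lam ⟨0, hn⟩ = 0)
    (hlampos : ∀ i : Fin n, i ≠ ⟨0, hn⟩ → 0 < lam i)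
    (hmono : ∀ i j : Fin n, i ≤ j → lam i ≤ lam j)
    (hv0 : v ⟨0, hn⟩ = fun _ => (Real.sqrt n)⁻¹)
    (hortho : ∀ i j : Fin n, (∑ k : Fin n, v i k * v j k) = if i = j then 1 else 0)
    (heig : ∀ i : Fin n, L.mulVec (v i) = lam i • v i) :
    ∃ δ₀ > (0 : ℝ), ∀ δ : ℝ, 0 < δ → δ ≤ δ₀ → ∀ cc : Fin n → ℝ,
      -- (i)
      ((∑ i ∈ Finset.univ.filter (fun i : Fin n => i ≠ ⟨0, hn⟩), lam i * (cc i) ^ 2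
          = δ ^ 2 / (2 * Real.pi) ^ 2) →
        Φ (∑ i : Fin n, cc i • v i) ≤ δ ^ 2) ∧
      -- (ii)
      ((∑ i ∈ Finset.univ.filter (fun i : Fin n => i ≠ ⟨0, hn⟩), lam i * (cc i) ^ 2
          = 4 * δ ^ 2 / (2 * Real.pi) ^ 2) →
        2 * δ ^ 2 ≤ Φ (∑ i : Fin n, cc i • v i)) := by
  have hπ : (0:ℝ) < Real.pi := Real.pi_pos
  by_cases hn2 : 2 ≤ n
  case neg =>
    -- n = 1 : both hypotheses are contradictory for δ > 0
    refine ⟨1, one_pos, fun δ hδ hδ0 cc => ?_⟩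
    have hone : n = 1 := by omega
    subst hone
    have hfe : (Finset.univ.filter (fun i : Fin 1 => i ≠ ⟨0, hn⟩)) = ∅ := by
      ext i; simp [Subsingleton.elim i (⟨0, hn⟩ : Fin 1)]
    constructor
    · intro h
      rw [hfe, Finset.sum_empty] at h
      have : (0:ℝ) < δ ^ 2 / (2 * Real.pi) ^ 2 := by positivity
      linarith
    · intro h
      rw [hfe, Finset.sum_empty] at h
      have : (0:ℝ) < 4 * δ ^ 2 / (2 * Real.pi) ^ 2 := by positivity
      linarith
  case pos =>
    have hn1 : (1:ℕ) < n := hn2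
    set i1 : Fin n := ⟨1, hn1⟩ with hi1def
    have hi1 : i1 ≠ ⟨0, hn⟩ := by simp [hi1def, Fin.ext_iff]
    have hlam2 : 0 < lam i1 := hlampos i1 hi1
    set slam := Real.sqrt (lam i1) with hslamdef
    have hslam : 0 < slam := Real.sqrt_pos.mpr hlam2
    have hnR : (0:ℝ) < n := by exact_mod_cast hn
    refine ⟨slam / (4 * n), by positivity, fun δ hδ hδ0 cc => ?_⟩
    set θ : Fin n → ℝ := fun k => ∑ i, cc i * v i k with hθdef
    have hθ : (∑ i : Fin n, cc i • v i) = θ := by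
      ext k; simp [hθdef, Finset.sum_apply]
    have hQ : (∑ k : Fin n, ∑ j : Fin n, if G.Adj k j then (θ k - θ j) ^ 2 else 0)
        = 2 * ∑ i, lam i * cc i ^ 2 := by
      rw [quad_eq n G L hL θ, ip_eq n L lam v hortho heig cc θ hθdef]
    have hnotf : Finset.univ.filter (fun i : Fin n => ¬ i ≠ ⟨0, hn⟩) = {(⟨0, hn⟩ : Fin n)} := by
      ext i; simp
    have hsplit : (∑ i, lam i * cc i ^ 2)
        = ∑ i ∈ Finset.univ.filter (fun i : Fin n => i ≠ ⟨0, hn⟩), lam i * cc i ^ 2 := by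
      rw [← Finset.sum_filter_add_sum_filter_not Finset.univ (fun i : Fin n => i ≠ ⟨0, hn⟩),
        hnotf, Finset.sum_singleton, hlam0]
      ring
    constructor
    · -- (i)
      intro hS
      rw [hθ, hΦ θ]
      calc (∑ k : Fin n, ∑ j : Fin n,
            if G.Adj k j then 1 - Real.cos (2 * Real.pi * (θ k - θ j)) else 0)
          ≤ ∑ k : Fin n, ∑ j : Fin n,
            2 * Real.pi ^ 2 * (if G.Adj k j then (θ k - θ j) ^ 2 else 0) := by
            refine Finset.sum_le_sum fun k _ => Finset.sum_le_sum fun j _ => ?_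
            split
            · have h := Real.one_sub_sq_div_two_le_cos (x := 2 * Real.pi * (θ k - θ j))
              nlinarith [h]
            · simp
        _ = 2 * Real.pi ^ 2 *
            (∑ k : Fin n, ∑ j : Fin n, if G.Adj k j then (θ k - θ j) ^ 2 else 0) := by
            simp only [← Finset.mul_sum]
        _ = δ ^ 2 := by
            rw [hQ, hsplit, hS]
            field_simp
    · -- (ii)
      intro hS
      -- coefficient bound
      have hccb : ∀ i ∈ Finset.univ.filter (fun i : Fin n => i ≠ ⟨0, hn⟩),
          |cc i| ≤ δ / (Real.pi * slam) := by
        intro i hi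
        have hi0 : i ≠ ⟨0, hn⟩ := by simpa using hi
        have hige : i1 ≤ i := by
          have hvne : i.val ≠ 0 := fun h => hi0 (Fin.ext h)
          rw [Fin.le_def, hi1def]
          simpa using Nat.one_le_iff_ne_zero.mpr hvne
        have hlge : lam i1 ≤ lam i := hmono i1 i hige
        have hterm : lam i * cc i ^ 2 ≤ 4 * δ ^ 2 / (2 * Real.pi) ^ 2 := by
          rw [← hS]
          exact Finset.single_le_sum
            (fun j hj => mul_nonneg (hlampos j (by simpa using hj)).le (sq_nonneg _)) hi
        have hval : 4 * δ ^ 2 / (2 * Real.pi) ^ 2 = δ ^ 2 / Real.pi ^ 2 := by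
          field_simp; ring
        rw [hval] at hterm
        have hcc2 : cc i ^ 2 ≤ (δ / (Real.pi * slam)) ^ 2 := by
          have hsq : slam ^ 2 = lam i1 := Real.sq_sqrt hlam2.le
          rw [div_pow, mul_pow, hsq, le_div_iff₀ (by positivity)]
          have h1 : lam i1 * cc i ^ 2 ≤ lam i * cc i ^ 2 :=
            mul_le_mul_of_nonneg_right hlge (sq_nonneg _)
          have h2 : lam i1 * cc i ^ 2 ≤ δ ^ 2 / Real.pi ^ 2 := le_trans h1 hterm
          have h3 : lam i1 * cc i ^ 2 * Real.pi ^ 2 ≤ δ ^ 2 :=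
            (le_div_iff₀ (by positivity : (0:ℝ) < Real.pi ^ 2)).mp h2
          nlinarith [h3]
        have h1 : |cc i| = Real.sqrt (cc i ^ 2) := (Real.sqrt_sq_eq_abs _).symm
        have h2 : δ / (Real.pi * slam) = Real.sqrt ((δ / (Real.pi * slam)) ^ 2) :=
          (Real.sqrt_sq (by positivity)).symm
        rw [h1, h2]
        exact Real.sqrt_le_sqrt hcc2
      have hvb : ∀ i k : Fin n, |v i k| ≤ 1 := by
        intro i k
        have h1 : v i k * v i k ≤ ∑ m, v i m * v i m :=
          Finset.single_le_sum (f := fun m => v i m * v i m)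
            (fun m _ => mul_self_nonneg _) (Finset.mem_univ k)
        rw [hortho i i] at h1
        simp at h1
        rw [abs_le]; constructor <;> nlinarith [h1]
      have hdiff : ∀ k j : Fin n, θ k - θ j
          = ∑ i ∈ Finset.univ.filter (fun i : Fin n => i ≠ ⟨0, hn⟩),
              cc i * (v i k - v i j) := by
        intro k j
        have h1 : θ k - θ j = ∑ i, cc i * (v i k - v i j) := by
          simp only [hθdef]
          rw [← Finset.sum_sub_distrib]
          exact Finset.sum_congr rfl fun i _ => by ring
        rw [h1, ← Finset.sum_filter_add_sum_filter_not Finset.univ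
          (fun i : Fin n => i ≠ ⟨0, hn⟩), hnotf, Finset.sum_singleton, hv0]
        simp
      have hdb : ∀ k j : Fin n, |θ k - θ j| ≤ n * (2 * δ / (Real.pi * slam)) := by
        intro k j
        rw [hdiff k j]
        calc |∑ i ∈ Finset.univ.filter (fun i : Fin n => i ≠ ⟨0, hn⟩),
              cc i * (v i k - v i j)|
            ≤ ∑ i ∈ Finset.univ.filter (fun i : Fin n => i ≠ ⟨0, hn⟩),
              |cc i * (v i k - v i j)| := Finset.abs_sum_le_sum_abs _ _
          _ ≤ ∑ _i ∈ Finset.univ.filter (fun i : Fin n => i ≠ ⟨0, hn⟩),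
              2 * δ / (Real.pi * slam) := by
              refine Finset.sum_le_sum fun i hi => ?_
              rw [abs_mul]
              have hc := hccb i hi
              have h3 : |v i k - v i j| ≤ 2 := by
                calc |v i k - v i j| ≤ |v i k| + |v i j| := abs_sub _ _
                  _ ≤ 2 := by linarith [hvb i k, hvb i j]
              calc |cc i| * |v i k - v i j| ≤ (δ / (Real.pi * slam)) * 2 :=
                    mul_le_mul hc h3 (abs_nonneg _) (by positivity)
                _ = 2 * δ / (Real.pi * slam) := by ring
          _ = ((Finset.univ.filter (fun i : Fin n => i ≠ ⟨0, hn⟩)).card : ℝ)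
              * (2 * δ / (Real.pi * slam)) := by rw [Finset.sum_const, nsmul_eq_mul]
          _ ≤ n * (2 * δ / (Real.pi * slam)) := by
              have hcard : (Finset.univ.filter (fun i : Fin n => i ≠ ⟨0, hn⟩)).card ≤ n :=
                le_trans (Finset.card_filter_le _ _) (by simp)
              exact mul_le_mul_of_nonneg_right (by exact_mod_cast hcard) (by positivity)
      have hsmall : ∀ k j : Fin n, |2 * Real.pi * (θ k - θ j)| ≤ 1 := by
        intro k j
        rw [abs_mul, abs_of_pos (by positivity : (0:ℝ) < 2 * Real.pi)]
        have h1 := hdb k j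
        calc 2 * Real.pi * |θ k - θ j|
            ≤ 2 * Real.pi * (n * (2 * δ / (Real.pi * slam))) :=
              mul_le_mul_of_nonneg_left h1 (by positivity)
          _ = 4 * n * δ / slam := by field_simp; ring
          _ ≤ 1 := by
              rw [div_le_one hslam]
              have h2 : 4 * (n:ℝ) * δ ≤ 4 * n * (slam / (4 * n)) := by
                apply mul_le_mul_of_nonneg_left hδ0 (by positivity)
              calc 4 * (n:ℝ) * δ ≤ 4 * n * (slam / (4 * n)) := h2
                _ = slam := by field_simp
      rw [hθ, hΦ θ]
      calc 2 * δ ^ 2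
          = Real.pi ^ 2 *
            (∑ k : Fin n, ∑ j : Fin n, if G.Adj k j then (θ k - θ j) ^ 2 else 0) := by
            rw [hQ, hsplit, hS]
            field_simp
            ring
        _ = ∑ k : Fin n, ∑ j : Fin n,
            Real.pi ^ 2 * (if G.Adj k j then (θ k - θ j) ^ 2 else 0) := by
            simp only [← Finset.mul_sum]
        _ ≤ ∑ k : Fin n, ∑ j : Fin n,
            (if G.Adj k j then 1 - Real.cos (2 * Real.pi * (θ k - θ j)) else 0) := by
            refine Finset.sum_le_sum fun k _ => Finset.sum_le_sum fun j _ => ?_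
            split
            · have hx := hsmall k j
              have h := one_sub_cos_ge_quarter _ hx
              nlinarith [h]
            · simp
end

section
/- Let n ≥ 3 be odd and q ∈ {1, …, n−1}. Then the q-twisted state u_n^{(q)} is a Lyapunov-stable equilibrium of the Kuramoto model on the complete graph K_n with repulsive coupling (α = 1) (Theorem 5.3). -/
/-- A solution of the repulsively coupled (`α = 1`) Kuramoto model on the complete
graph `K_n` with vertex set `Z_n` (lifted to `ℝ^n`):
`du_x/dt = (-1/(n-1)) ∑_{y ≠ x} sin(2π(u_y - u_x))`. -/
def IsRepulsiveKuramotoSolComplete (n : ℕ) [NeZero n] (θ : ℝ → ZMod n → ℝ) : Prop :=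
  ∀ (t : ℝ) (x : ZMod n), HasDerivAt (fun s => θ s x)
    (((-1 : ℝ) / ((n : ℝ) - 1)) *
      ∑ y ∈ Finset.univ.erase x, Real.sin (2 * Real.pi * (θ t y - θ t x))) t

/-- Projection of a lifted configuration to the torus `T^n = (ℝ/ℤ)^n`. -/
noncomputable def torusProjZ (n : ℕ) (θ : ZMod n → ℝ) : ZMod n → AddCircle (1 : ℝ) :=
  fun x => (θ x : AddCircle (1 : ℝ))

/-!
Write `Z(θ) = ∑ₓ e^{2πiθₓ}` for the order parameter and `gₓ = ∑_y sin 2π(θ_y - θₓ) =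
Im(e^{-2πiθₓ} Z)` for the coupling term. The repulsive flow is a gradient flow for `E = ‖Z‖²`:
along solutions `E' = -(4π/(n-1)) ∑ₓ gₓ²`, and the identity `2 ∑ₓ gₓ² = n‖Z‖² - Re(Z̄² Z(2θ))`
makes `E` decay like `e^{-πt}` as long as `‖Z(2θ)‖ ≤ n/2`. For the `q`-twisted state both `Z` and
`Z(2·)` vanish (sums of `n`-th roots of unity; `n ∤ 2q` because `n` is odd), so near it the phases
move by at most `2‖Z(θ(0))‖/π`, which is proportional to the initial distance, and a continuity
argument keeps the trajectory in the region `‖Z(2θ)‖ ≤ n/2` for all time.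
-/

open Finset Real ComplexConjugate

theorem norm_exp_mul_I_sub_exp_mul_I_le (a b : ℝ) :
    ‖Complex.exp (a * Complex.I) - Complex.exp (b * Complex.I)‖ ≤ |a - b| := by
  have h : Complex.exp (a * Complex.I) - Complex.exp (b * Complex.I) =
      Complex.exp (b * Complex.I) * (Complex.exp (Complex.I * ↑(a - b)) - 1) := by
    rw [mul_sub, ← Complex.exp_add]; push_cast; ring_nf
  rw [h, norm_mul, Complex.norm_exp_ofReal_mul_I, one_mul]
  exact Real.norm_exp_I_mul_ofReal_sub_one_le

theorem two_mul_im_conj_mul_sq {w : ℂ} (hw : ‖w‖ = 1) (z : ℂ) :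
    2 * (conj w * z).im ^ 2 = ‖z‖ ^ 2 - (conj z ^ 2 * w ^ 2).re := by
  have h : w.re * w.re + w.im * w.im = 1 := by
    rw [← Complex.normSq_apply, ← Complex.sq_norm, hw, one_pow]
  rw [Complex.sq_norm, Complex.normSq_apply]
  simp only [pow_two, Complex.mul_re, Complex.mul_im, Complex.conj_re, Complex.conj_im]
  linear_combination (z.re * z.re + z.im * z.im) * h

section OrderParameter

variable {ι : Type*} [Fintype ι]

noncomputable def orderParam (θ : ι → ℝ) : ℂ :=
  ∑ x, Complex.exp (↑(2 * π * θ x) * Complex.I)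

theorem orderParam_add_intCast (θ : ι → ℝ) (k : ι → ℤ) :
    orderParam (fun x => θ x + k x) = orderParam θ := by
  refine sum_congr rfl fun x _ => ?_
  rw [show (↑(2 * π * (θ x + k x)) : ℂ) * Complex.I =
      ↑(2 * π * θ x) * Complex.I + k x * (2 * π * Complex.I) by push_cast; ring,
    Complex.exp_add, Complex.exp_int_mul_two_pi_mul_I, mul_one]

theorem norm_orderParam_sub_le (θ φ : ι → ℝ) :
    ‖orderParam θ - orderParam φ‖ ≤ Fintype.card ι * (2 * π * ‖θ - φ‖) := by
  rw [orderParam, orderParam, ← sum_sub_distrib]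
  calc _ ≤ ∑ x, |2 * π * θ x - 2 * π * φ x| :=
        (norm_sum_le _ _).trans (sum_le_sum fun x _ => norm_exp_mul_I_sub_exp_mul_I_le _ _)
    _ = ∑ x, 2 * π * ‖(θ - φ) x‖ := by
        simp only [← mul_sub, abs_mul, abs_of_pos two_pi_pos]; rfl
    _ ≤ ∑ _x : ι, 2 * π * ‖θ - φ‖ := by gcongr with x; exact norm_le_pi_norm _ x
    _ = _ := by simp

theorem norm_orderParam_two_smul_le {θ w : ι → ℝ} (hw : orderParam (2 • w) = 0)
    (h : ‖θ - w‖ ≤ 1 / (8 * π)) :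
    ‖orderParam (2 • θ)‖ ≤ Fintype.card ι / 2 := by
  have hsub := norm_orderParam_sub_le (2 • θ) (2 • w)
  rw [hw, sub_zero, ← smul_sub] at hsub
  have h2 : ‖2 • (θ - w)‖ ≤ 1 / (4 * π) := by
    calc ‖2 • (θ - w)‖ ≤ 2 * ‖θ - w‖ := by
          rw [RCLike.norm_nsmul ℝ, nsmul_eq_mul, Nat.cast_ofNat]
      _ ≤ 2 * (1 / (8 * π)) := by gcongr
      _ = 1 / (4 * π) := by field_simp; ring
  calc ‖orderParam (2 • θ)‖ ≤ Fintype.card ι * (2 * π * (1 / (4 * π))) := by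
        refine hsub.trans ?_; gcongr
    _ = Fintype.card ι / 2 := by field_simp; ring

noncomputable def coupling (θ : ι → ℝ) (x : ι) : ℝ :=
  ∑ y, sin (2 * π * (θ y - θ x))

theorem coupling_eq_im (θ : ι → ℝ) (x : ι) :
    coupling θ x = (conj (Complex.exp (↑(2 * π * θ x) * Complex.I)) * orderParam θ).im := by
  rw [orderParam, mul_sum, Complex.im_sum]
  refine sum_congr rfl fun y _ => ?_
  rw [← Complex.exp_conj, ← Complex.exp_add, map_mul, Complex.conj_ofReal, Complex.conj_I,
    ← Complex.exp_ofReal_mul_I_im]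
  congr 2
  push_cast
  ring

theorem abs_coupling_le (θ : ι → ℝ) (x : ι) : |coupling θ x| ≤ ‖orderParam θ‖ := by
  rw [coupling_eq_im]
  refine (Complex.abs_im_le_norm _).trans_eq ?_
  rw [norm_mul, Complex.norm_conj, Complex.norm_exp_ofReal_mul_I, one_mul]

theorem two_mul_sum_coupling_sq (θ : ι → ℝ) :
    2 * ∑ x, coupling θ x ^ 2 =
      Fintype.card ι * ‖orderParam θ‖ ^ 2 -
        (conj (orderParam θ) ^ 2 * orderParam (2 • θ)).re := by
  rw [show orderParam (2 • θ) = ∑ x, Complex.exp (↑(2 * π * (2 • θ) x) * Complex.I) from rfl,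
    mul_sum, mul_sum, Complex.re_sum, ← nsmul_eq_mul, ← card_univ,
    ← sum_const, ← sum_sub_distrib]
  refine sum_congr rfl fun x _ => ?_
  rw [coupling_eq_im, two_mul_im_conj_mul_sq (Complex.norm_exp_ofReal_mul_I _),
    ← Complex.exp_nat_mul]
  congr 4
  simp only [Pi.smul_apply, nsmul_eq_mul]
  push_cast
  ring

theorem card_sub_mul_le_two_mul_sum_coupling_sq (θ : ι → ℝ) :
    (Fintype.card ι - ‖orderParam (2 • θ)‖) * ‖orderParam θ‖ ^ 2 ≤
      2 * ∑ x, coupling θ x ^ 2 := by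
  have h := Complex.re_le_norm (conj (orderParam θ) ^ 2 * orderParam (2 • θ))
  rw [norm_mul, norm_pow, Complex.norm_conj] at h
  rw [two_mul_sum_coupling_sq]
  linarith

theorem hasDerivAt_norm_orderParam_sq {θ : ℝ → ι → ℝ} {θ' : ι → ℝ} {t : ℝ}
    (hθ : ∀ x, HasDerivAt (fun s => θ s x) (θ' x) t) :
    HasDerivAt (fun s => ‖orderParam (θ s)‖ ^ 2) (4 * π * ∑ x, θ' x * coupling (θ t) x) t := by
  have hZ : HasDerivAt (fun s => orderParam (θ s))
      (∑ x, Complex.exp (↑(2 * π * θ t x) * Complex.I) * (↑(2 * π * θ' x) * Complex.I)) t :=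
    HasDerivAt.fun_sum fun x _ =>
      (((hθ x).const_mul (2 * π)).ofReal_comp.mul_const Complex.I).cexp
  convert hZ.norm_sq using 1
  rw [Complex.inner, sum_mul, Complex.re_sum, mul_sum, mul_sum]
  refine sum_congr rfl fun x _ => ?_
  rw [coupling_eq_im]
  simp only [Complex.mul_re, Complex.mul_im, Complex.conj_re, Complex.conj_im, Complex.ofReal_re,
    Complex.ofReal_im, Complex.I_re, Complex.I_im]
  ring

end OrderParameter

theorem sum_zmod_val_eq_sum_range {M : Type*} [AddCommMonoid M] (n : ℕ) [NeZero n]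
    (f : ℕ → M) :
    ∑ x : ZMod n, f x.val = ∑ i ∈ range n, f i :=
  sum_nbij' (fun x => x.val) (fun i => (i : ZMod n)) (fun x _ => mem_range.2 x.val_lt)
    (fun _ _ => mem_univ _) (fun x _ => ZMod.natCast_zmod_val x)
    (fun _ hi => ZMod.val_cast_of_lt (mem_range.1 hi)) (fun _ _ => rfl)

theorem orderParam_eq_zero_of_not_dvd {n m : ℕ} [NeZero n] (hm : ¬ n ∣ m) {c : ℝ}
    {u : ZMod n → ℝ} (hu : ∀ x, u x = ((m * x.val : ℕ) : ℝ) / n + c) : orderParam u = 0 := by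
  set ζ := Complex.exp (2 * π * Complex.I / n)
  have hζ : IsPrimitiveRoot ζ n := Complex.isPrimitiveRoot_exp n (NeZero.ne n)
  have hterm : ∀ x : ZMod n, Complex.exp (↑(2 * π * u x) * Complex.I) =
      Complex.exp (↑(2 * π * c) * Complex.I) * (ζ ^ m) ^ x.val := by
    intro x
    rw [hu, ← pow_mul, ← Complex.exp_nat_mul, ← Complex.exp_add]
    congr 1
    push_cast
    field_simp
    ring
  have hζm : ζ ^ m ≠ 1 := fun h => hm ((hζ.pow_eq_one_iff_dvd m).1 h)
  have hgeom : ∑ i ∈ range n, (ζ ^ m) ^ i = 0 := by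
    have h := geom_sum_mul (ζ ^ m) n
    rw [← pow_mul, mul_comm m n, pow_mul, hζ.pow_eq_one, one_pow, sub_self] at h
    exact (mul_eq_zero.1 h).resolve_right (sub_ne_zero.2 hζm)
  rw [orderParam, sum_congr rfl fun x _ => hterm x, ← mul_sum,
    sum_zmod_val_eq_sum_range n fun i => (ζ ^ m) ^ i, hgeom, mul_zero]

theorem abs_sub_le_of_abs_deriv_le_mul_exp {f f' : ℝ → ℝ} {a b T : ℝ} (ha : 0 ≤ a) (hb : 0 < b)
    (hT : 0 ≤ T) (hf : ∀ t, HasDerivAt f (f' t) t)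
    (hbound : ∀ t ∈ Set.Ico 0 T, |f' t| ≤ a * exp (-b * t)) : |f T - f 0| ≤ a / b := by
  have hB : ∀ t, HasDerivAt (fun s => a / b * (1 - exp (-b * s))) (a * exp (-b * t)) t := by
    intro t
    refine ((((hasDerivAt_id t).const_mul (-b)).exp.const_sub 1).const_mul (a / b)).congr_deriv ?_
    field_simp
    simp
  have h := image_norm_le_of_norm_deriv_right_le_deriv_boundary (f := fun s => f s - f 0)
    (fun s _ => ((hf s).sub_const (f 0)).continuousAt.continuousWithinAt)
    (fun s _ => ((hf s).sub_const (f 0)).hasDerivWithinAt) (by simp) hB hbound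
    (Set.right_mem_Icc.2 hT)
  calc |f T - f 0| ≤ a / b * (1 - exp (-b * T)) := h
    _ ≤ a / b := mul_le_of_le_one_right (div_nonneg ha hb.le) (by linarith [exp_pos (-b * T)])

theorem forall_lt_of_forall_Ico_lt {f : ℝ → ℝ} {M : ℝ} (hf : Continuous f)
    (h : ∀ T, 0 ≤ T → (∀ t ∈ Set.Ico 0 T, f t < M) → f T < M) : ∀ t, 0 ≤ t → f t < M := by
  by_contra! hbad
  obtain ⟨t, ht⟩ := hbad
  set S := Set.Ici 0 ∩ f ⁻¹' Set.Ici M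
  have hbdd : BddBelow S := ⟨0, fun s hs => hs.1⟩
  have hmem : sInf S ∈ S :=
    (isClosed_Ici.inter (isClosed_Ici.preimage hf)).csInf_mem ⟨t, ht⟩ hbdd
  refine (h _ hmem.1 fun s hs => ?_).not_ge hmem.2
  by_contra! hs'
  exact (csInf_le hbdd ⟨hs.1, hs'⟩).not_gt hs.2

namespace IsRepulsiveKuramotoSolComplete

variable {n : ℕ} [NeZero n] {θ : ℝ → ZMod n → ℝ}

theorem hasDerivAt_apply (hθ : IsRepulsiveKuramotoSolComplete n θ) (t : ℝ) (x : ZMod n) :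
    HasDerivAt (fun s => θ s x) (-coupling (θ t) x / (n - 1)) t := by
  convert hθ t x using 1
  rw [coupling, ← sum_erase_add _ _ (mem_univ x), sub_self, mul_zero, sin_zero, add_zero]
  ring

protected theorem continuous (hθ : IsRepulsiveKuramotoSolComplete n θ) : Continuous θ :=
  continuous_pi fun x =>
    continuous_iff_continuousAt.2 fun t => (hθ.hasDerivAt_apply t x).continuousAt

theorem hasDerivAt_norm_orderParam_sq (hθ : IsRepulsiveKuramotoSolComplete n θ) (t : ℝ) :
    HasDerivAt (fun s => ‖orderParam (θ s)‖ ^ 2)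
      (-(4 * π / (n - 1)) * ∑ x, coupling (θ t) x ^ 2) t := by
  refine (_root_.hasDerivAt_norm_orderParam_sq (hθ.hasDerivAt_apply t)).congr_deriv ?_
  rw [mul_sum, mul_sum]
  refine sum_congr rfl fun x _ => ?_
  ring

theorem norm_orderParam_sq_le (hθ : IsRepulsiveKuramotoSolComplete n θ) (hn : 2 ≤ n) {T : ℝ}
    (hT : ∀ t ∈ Set.Ico 0 T, ‖orderParam (2 • θ t)‖ ≤ n / 2) :
    ∀ t ∈ Set.Icc 0 T, ‖orderParam (θ t)‖ ^ 2 ≤ ‖orderParam (θ 0)‖ ^ 2 * exp (-π * t) := by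
  have hn1 : (1 : ℝ) ≤ n - 1 := by
    have : (2 : ℝ) ≤ n := by exact_mod_cast hn
    linarith
  have hdecay : ∀ t ∈ Set.Ico 0 T, -(4 * π / (n - 1)) * ∑ x, coupling (θ t) x ^ 2 ≤
      -π * ‖orderParam (θ t)‖ ^ 2 + 0 := by
    intro t ht
    have hcoer := card_sub_mul_le_two_mul_sum_coupling_sq (θ t)
    rw [ZMod.card] at hcoer
    have hE := sq_nonneg ‖orderParam (θ t)‖
    have h4 : (n - 1) * ‖orderParam (θ t)‖ ^ 2 ≤ 4 * ∑ x, coupling (θ t) x ^ 2 := by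
      nlinarith [hT t ht]
    rw [add_zero, neg_mul, neg_mul, neg_le_neg_iff, div_mul_eq_mul_div,
      le_div_iff₀ (by linarith)]
    nlinarith [pi_pos]
  intro t ht
  have h := le_gronwallBound_of_liminf_deriv_right_le
    (fun s _ => (hθ.hasDerivAt_norm_orderParam_sq s).continuousAt.continuousWithinAt)
    (fun s _ _ hr =>
      (hθ.hasDerivAt_norm_orderParam_sq s).hasDerivWithinAt.liminf_right_slope_le hr)
    le_rfl hdecay t ht
  rwa [gronwallBound_ε0, sub_zero] at h

theorem abs_sub_le (hθ : IsRepulsiveKuramotoSolComplete n θ) (hn : 2 ≤ n) {T : ℝ}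
    (hT0 : 0 ≤ T) (hT : ∀ t ∈ Set.Ico 0 T, ‖orderParam (2 • θ t)‖ ≤ n / 2) (x : ZMod n) :
    |θ T x - θ 0 x| ≤ 2 * ‖orderParam (θ 0)‖ / π := by
  have hn1 : (1 : ℝ) ≤ n - 1 := by
    have : (2 : ℝ) ≤ n := by exact_mod_cast hn
    linarith
  refine (abs_sub_le_of_abs_deriv_le_mul_exp (norm_nonneg _) (half_pos pi_pos) hT0
    (hθ.hasDerivAt_apply · x) fun t ht => ?_).trans_eq (by field_simp)
  have hZ : ‖orderParam (θ t)‖ ≤ ‖orderParam (θ 0)‖ * exp (-(π / 2) * t) := by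
    have hexp : exp (-(π / 2) * t) ^ 2 = exp (-π * t) := by rw [← exp_nat_mul]; ring_nf
    rw [← pow_le_pow_iff_left₀ (norm_nonneg _) (by positivity) two_ne_zero, mul_pow, hexp]
    exact hθ.norm_orderParam_sq_le hn hT t (Set.Ico_subset_Icc_self ht)
  calc |-coupling (θ t) x / (n - 1)| = |coupling (θ t) x| / (n - 1) := by
        rw [abs_div, abs_neg, abs_of_pos (by linarith : (0 : ℝ) < n - 1)]
    _ ≤ |coupling (θ t) x| := div_le_self (abs_nonneg _) hn1
    _ ≤ _ := (abs_coupling_le _ _).trans hZ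

end IsRepulsiveKuramotoSolComplete

theorem dist_torusProjZ_le (n : ℕ) [NeZero n] (a b : ZMod n → ℝ) :
    dist (torusProjZ n a) (torusProjZ n b) ≤ ‖a - b‖ :=
  (dist_pi_le_iff (norm_nonneg _)).2 fun x => by
    simp only [torusProjZ, dist_eq_norm, ← AddCircle.coe_sub]
    exact QuotientAddGroup.norm_mk_le_norm.trans (norm_le_pi_norm (a - b) x)

theorem torusProjZ_add_intCast (n : ℕ) (a : ZMod n → ℝ) (k : ZMod n → ℤ) :
    torusProjZ n (fun x => a x + k x) = torusProjZ n a := by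
  funext x
  simp [torusProjZ]

theorem exists_intCast_norm_sub_lt {n : ℕ} [NeZero n] {a b : ZMod n → ℝ} {δ : ℝ}
    (h : dist (torusProjZ n a) (torusProjZ n b) < δ) :
    ∃ k : ZMod n → ℤ, ‖a - fun x => b x + k x‖ < δ := by
  refine ⟨fun x => round (a x - b x), (pi_norm_lt_iff (dist_nonneg.trans_lt h)).2 fun x => ?_⟩
  have hx := (dist_le_pi_dist _ _ x).trans_lt h
  simp only [torusProjZ, dist_eq_norm, ← AddCircle.coe_sub, UnitAddCircle.norm_eq] at hx
  simpa [sub_sub] using hx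

theorem exists_forall_norm_sub_lt_of_orderParam_eq_zero {n : ℕ} [NeZero n] (hn : 2 ≤ n)
    {ε : ℝ} (hε : 0 < ε) :
    ∃ δ > 0, ∀ w : ZMod n → ℝ, orderParam w = 0 → orderParam (2 • w) = 0 →
      ∀ θ : ℝ → ZMod n → ℝ, IsRepulsiveKuramotoSolComplete n θ → ‖θ 0 - w‖ < δ →
        ∀ t ≥ 0, ‖θ t - w‖ < ε := by
  have hn1 : (1 : ℝ) ≤ n := by exact_mod_cast NeZero.one_le
  set δ := min ε (1 / 30) / (5 * n) with hδ
  have hδ0 : 0 < δ := by positivity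
  have h5δ : 5 * n * δ = min ε (1 / 30) := by rw [hδ]; field_simp
  refine ⟨δ, hδ0, fun w hw1 hw2 θ hθ h0 => ?_⟩
  have hZ0 : ‖orderParam (θ 0)‖ ≤ n * (2 * π * ‖θ 0 - w‖) := by
    simpa [hw1, ZMod.card] using norm_orderParam_sub_le (θ 0) w
  have hdrift : ∀ t ≥ 0, ‖θ t - θ 0‖ < 4 * n * δ := by
    refine forall_lt_of_forall_Ico_lt (hθ.continuous.sub continuous_const).norm
      fun T hT hbefore => ?_
    have hreg : ∀ t ∈ Set.Ico 0 T, ‖orderParam (2 • θ t)‖ ≤ n / 2 := by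
      intro t ht
      simpa [ZMod.card] using norm_orderParam_two_smul_le hw2 <| calc
        ‖θ t - w‖ ≤ ‖θ t - θ 0‖ + ‖θ 0 - w‖ := norm_sub_le_norm_sub_add_norm_sub _ _ _
        _ ≤ 4 * n * δ + δ := add_le_add (hbefore t ht).le h0.le
        _ ≤ 5 * n * δ := by nlinarith
        _ ≤ 1 / (8 * π) := by
          rw [h5δ]
          exact (min_le_right _ _).trans
            (one_div_le_one_div_of_le (by positivity) (by linarith [pi_lt_d2]))
    refine lt_of_le_of_lt ((pi_norm_le_iff_of_nonneg (by positivity)).2 fun x => ?_)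
      (mul_lt_mul_of_pos_left h0 (by positivity) : 4 * n * ‖θ 0 - w‖ < 4 * n * δ)
    calc ‖(θ T - θ 0) x‖ ≤ 2 * ‖orderParam (θ 0)‖ / π := hθ.abs_sub_le hn hT hreg x
      _ ≤ 2 * (n * (2 * π * ‖θ 0 - w‖)) / π := by gcongr
      _ = 4 * n * ‖θ 0 - w‖ := by field_simp; ring
  intro t ht
  calc ‖θ t - w‖ ≤ ‖θ t - θ 0‖ + ‖θ 0 - w‖ := norm_sub_le_norm_sub_add_norm_sub _ _ _
    _ < 4 * n * δ + δ := add_lt_add (hdrift t ht) h0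
    _ ≤ 5 * n * δ := by nlinarith
    _ ≤ ε := h5δ ▸ min_le_left _ _

theorem twisted_state_stable_complete_graph_repulsive_general
    (n : ℕ) (hodd : Odd n) [NeZero n]
    (q : ℕ) (hq1 : 1 ≤ q) (hq2 : q ≤ n - 1) (c : ℝ)
    (uq : ZMod n → ℝ)
    (huq : ∀ x : ZMod n, uq x = ((q * x.val : ℕ) : ℝ) / n + c) :
    ∀ ε > (0 : ℝ), ∃ δ > (0 : ℝ), ∀ θ : ℝ → ZMod n → ℝ,
      IsRepulsiveKuramotoSolComplete n θ →
      dist (torusProjZ n (θ 0)) (torusProjZ n uq) < δ →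
      ∀ t ≥ (0 : ℝ), dist (torusProjZ n (θ t)) (torusProjZ n uq) < ε := by
  intro ε hε
  have hq : ¬ n ∣ q := Nat.not_dvd_of_pos_of_lt hq1 (by omega)
  have h2q : ¬ n ∣ 2 * q := fun h => hq ((Nat.coprime_two_right.2 hodd).dvd_of_dvd_mul_left h)
  obtain ⟨δ, hδ, hstable⟩ :=
    exists_forall_norm_sub_lt_of_orderParam_eq_zero (n := n) (by omega) hε
  refine ⟨δ, hδ, fun θ hθ h0 t ht => ?_⟩
  obtain ⟨k, hk⟩ := exists_intCast_norm_sub_lt h0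
  have hw1 : orderParam (fun x => uq x + k x) = 0 := by
    rw [orderParam_add_intCast]
    exact orderParam_eq_zero_of_not_dvd hq huq
  have hw2 : orderParam (2 • fun x => uq x + k x) = 0 := by
    have h2 : (2 • fun x => uq x + k x) = fun x => 2 * uq x + ((2 * k x : ℤ) : ℝ) := by
      funext x; simp only [Pi.smul_apply, nsmul_eq_mul]; push_cast; ring
    rw [h2, orderParam_add_intCast]
    exact orderParam_eq_zero_of_not_dvd h2q (c := 2 * c) fun x => by
      rw [huq]; push_cast; ring
  calc dist (torusProjZ n (θ t)) (torusProjZ n uq)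
      = dist (torusProjZ n (θ t)) (torusProjZ n fun x => uq x + k x) := by
        rw [torusProjZ_add_intCast]
    _ ≤ ‖θ t - fun x => uq x + k x‖ := dist_torusProjZ_le n _ _
    _ < ε := hstable _ hw1 hw2 θ hθ hk t ht

/-- Theorem 5.3: for odd `n ≥ 3` and `q ∈ {1,…,n-1}`, the `q`-twisted
state is a Lyapunov-stable equilibrium of the Kuramoto model on the complete graph
`K_n` with repulsive coupling. -/
theorem twisted_state_stable_complete_graph_repulsive
    (n : ℕ) (hn3 : 3 ≤ n) (hodd : Odd n) [NeZero n]
    (q : ℕ) (hq1 : 1 ≤ q) (hq2 : q ≤ n - 1) (c : ℝ)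
    (uq : ZMod n → ℝ)
    (huq : ∀ x : ZMod n, uq x = ((q * x.val : ℕ) : ℝ) / n + c) :
    ∀ ε > (0 : ℝ), ∃ δ > (0 : ℝ), ∀ θ : ℝ → ZMod n → ℝ,
      IsRepulsiveKuramotoSolComplete n θ →
      dist (torusProjZ n (θ 0)) (torusProjZ n uq) < δ →
      ∀ t ≥ (0 : ℝ), dist (torusProjZ n (θ t)) (torusProjZ n uq) < ε :=
  twisted_state_stable_complete_graph_repulsive_general n hodd q hq1 hq2 c uq huq
end

section
/- Let n ≡ 1 (mod 4) be prime. The eigenvalues of the linearization of the Kuramoto model on the Paley graph P_n about the q-twisted state u_n^{(q)} are λ_x(q) = ((−1)^α · π/(n−1)) · ( G_n(q+x) − 2G_n(q) + G_n(q−x) ), x ∈ Z_n, where the arguments of G_n are taken modulo n (the formula expressing the linearization spectrum through Gauss sums, Section 6). -/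
/-!
Write `ψ` for the standard additive character of `ZMod n` and `T m = ∑ y ∈ Q, ψ (m * y)`.
The Fourier modes `e x = ψ (x * ·)` diagonalise every convolution operator, with eigenvalue
`∑ y ∈ Q, δ y * (ψ (-(x * y)) - 1)`. Expanding the cosine in `δ` as `(ψ (q y) + ψ (-q y)) / 2` and
using `Q = -Q` (since `n ≡ 1 mod 4`, `-1` is a square) gives
`((-1) ^ α π / |Q|) (T (q + x) - 2 T q + T (q - x))`.
Every nonzero square has exactly two square roots, so `G m = 1 + 2 T m`; at `m = 0` this also gives
`|Q| = (n - 1) / 2`.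
-/

open Finset

section SquareSums

variable {R M : Type*} [CommRing R] [IsDomain R] [Fintype R] [DecidableEq R] [AddCommMonoid M]

lemma card_filter_sq_eq_sq (h2 : (2 : R) ≠ 0) {b : R} (hb : b ≠ 0) :
    #{a | a ^ 2 = b ^ 2} = 2 := by
  have hfib : ({a | a ^ 2 = b ^ 2} : Finset R) = {b, -b} := by
    ext a
    simp [sq_eq_sq_iff_eq_or_eq_neg]
  have hb' : b ≠ -b := fun h => hb <| (mul_eq_zero.1 (by linear_combination h)).resolve_left h2
  rw [hfib, card_pair hb']

theorem sum_sq_eq_add_two_nsmul_sum (h2 : (2 : R) ≠ 0) {Q : Finset R}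
    (hQ : ∀ a, a ∈ Q ↔ a ≠ 0 ∧ ∃ x, x ^ 2 = a) (f : R → M) :
    ∑ a, f (a ^ 2) = f 0 + 2 • ∑ y ∈ Q, f y := by
  have himage : univ.image (· ^ 2) = insert 0 Q := by
    ext y
    by_cases hy : y = 0 <;> simp [hQ, hy]
  rw [sum_comp, himage, sum_insert fun h => ((hQ 0).1 h).1 rfl, smul_sum]
  congr 1
  · simp only [sq_eq_zero_iff, filter_eq', mem_univ, if_true, card_singleton, one_smul]
  · refine sum_congr rfl fun y hy => ?_
    obtain ⟨hy0, b, rfl⟩ := (hQ y).1 hy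
    rw [card_filter_sq_eq_sq h2 (by rintro rfl; simp at hy0)]

theorem two_mul_card_add_one_eq_card (h2 : (2 : R) ≠ 0) {Q : Finset R}
    (hQ : ∀ a, a ∈ Q ↔ a ≠ 0 ∧ ∃ x, x ^ 2 = a) :
    2 * #Q + 1 = Fintype.card R := by
  simpa [add_comm] using (sum_sq_eq_add_two_nsmul_sum h2 hQ (fun _ => (1 : ℕ))).symm

end SquareSums

lemma neg_mem_of_isSquare_neg_one {R : Type*} [CommRing R] {Q : Finset R}
    (hQ : ∀ a, a ∈ Q ↔ a ≠ 0 ∧ ∃ x, x ^ 2 = a) (h : IsSquare (-1 : R)) {y : R} (hy : y ∈ Q) :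
    -y ∈ Q := by
  obtain ⟨i, hi⟩ := h
  obtain ⟨hy0, x, rfl⟩ := (hQ y).1 hy
  exact (hQ _).2 ⟨neg_ne_zero.2 hy0, i * x, by linear_combination x ^ 2 * hi.symm⟩

lemma sum_comp_neg_of_neg_mem {G M : Type*} [AddGroup G] [AddCommMonoid M] {S : Finset G}
    (hS : ∀ y ∈ S, -y ∈ S) (f : G → M) : ∑ y ∈ S, f (-y) = ∑ y ∈ S, f y :=
  sum_equiv (Equiv.neg G) (fun y => ⟨hS y, fun h => by simpa using hS _ h⟩) (fun _ _ => rfl)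

section Characters

variable {R : Type*} [CommRing R] (ψ : AddChar R ℂ)

lemma sum_mul_addChar_sub [Fintype R] {δ : R → ℂ} {S : Finset R} (hδ : ∀ y ∉ S, δ y = 0) (x z : R) :
    ∑ y, δ y * ψ (x * (z - y)) - (∑ y ∈ S, δ y) * ψ (x * z) =
      (∑ y ∈ S, δ y * (ψ (-(x * y)) - 1)) * ψ (x * z) := by
  rw [← sum_subset (subset_univ S) fun y _ hy => by rw [hδ y hy, zero_mul], sum_mul, sum_mul,
    ← sum_sub_distrib]
  refine sum_congr rfl fun y _ => ?_
  rw [show x * (z - y) = x * z + -(x * y) by ring, AddChar.map_add_eq_mul]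
  ring

lemma sum_addChar_add_neg_mul_sub_one {S : Finset R} (hS : ∀ y ∈ S, -y ∈ S) (q x : R) :
    ∑ y ∈ S, (ψ (q * y) + ψ (-(q * y))) * (ψ (-(x * y)) - 1) =
      ∑ y ∈ S, ψ ((q + x) * y) - 2 * ∑ y ∈ S, ψ (q * y) + ∑ y ∈ S, ψ ((q - x) * y) := by
  have hsymm : ∀ m, ∑ y ∈ S, ψ (-(m * y)) = ∑ y ∈ S, ψ (m * y) := fun m => by
    simpa only [mul_neg] using sum_comp_neg_of_neg_mem hS fun y => ψ (m * y)
  have hterm : ∀ y, (ψ (q * y) + ψ (-(q * y))) * (ψ (-(x * y)) - 1) =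
      ψ ((q - x) * y) + ψ (-((q + x) * y)) - ψ (q * y) - ψ (-(q * y)) := fun y => by
    rw [add_mul, mul_sub, mul_sub, mul_one, mul_one, ← AddChar.map_add_eq_mul,
      ← AddChar.map_add_eq_mul]
    ring_nf
  simp only [hterm, sum_sub_distrib, sum_add_distrib, hsymm]
  ring

end Characters

lemma ZMod.stdAddChar_natCast (n : ℕ) [NeZero n] (j : ℕ) :
    ZMod.stdAddChar (j : ZMod n) = Complex.exp (2 * Real.pi * Complex.I * j / n) :=
  ZMod.toCircle_natCast j

lemma ZMod.sum_range_natCast {M : Type*} [AddCommMonoid M] (n : ℕ) [NeZero n] (f : ZMod n → M) :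
    ∑ k ∈ range n, f k = ∑ a, f a :=
  sum_nbij' (↑) ZMod.val (fun _ _ => mem_univ _) (fun a _ => mem_range.2 a.val_lt)
    (fun _ hk => ZMod.val_natCast_of_lt (mem_range.1 hk)) (fun a _ => ZMod.natCast_zmod_val a)
    (fun _ _ => rfl)

section StdAddChar

variable {n : ℕ} [NeZero n]

lemma exp_val_mul_val_eq_stdAddChar (a b : ZMod n) :
    Complex.exp (2 * Real.pi * Complex.I * ((a.val * b.val : ℕ) : ℂ) / n) =
      ZMod.stdAddChar (a * b) := by
  rw [← ZMod.stdAddChar_natCast, Nat.cast_mul, ZMod.natCast_zmod_val, ZMod.natCast_zmod_val]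

lemma ofReal_cos_val_mul_val (a b : ZMod n) :
    ((Real.cos (2 * Real.pi * ((a.val * b.val : ℕ) : ℝ) / n) : ℝ) : ℂ) =
      (ZMod.stdAddChar (a * b) + ZMod.stdAddChar (-(a * b))) / 2 := by
  rw [AddChar.map_neg_eq_inv, ← exp_val_mul_val_eq_stdAddChar, ← Complex.exp_neg,
    Complex.ofReal_cos, Complex.cos]
  congr 3 <;> push_cast <;> ring

lemma sum_range_exp_val_mul_sq [Fact n.Prime] (h2 : (2 : ZMod n) ≠ 0) {Q : Finset (ZMod n)}
    (hQ : ∀ a, a ∈ Q ↔ a ≠ 0 ∧ ∃ x, x ^ 2 = a) (m : ZMod n) :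
    ∑ k ∈ range n, Complex.exp (2 * Real.pi * Complex.I * ((m.val * k ^ 2 : ℕ) : ℂ) / n) =
      1 + 2 * ∑ y ∈ Q, ZMod.stdAddChar (m * y) := by
  calc _ = ∑ k ∈ range n, ZMod.stdAddChar (m * (k : ZMod n) ^ 2) :=
        sum_congr rfl fun k _ => by
          rw [← ZMod.stdAddChar_natCast]; push_cast [ZMod.natCast_zmod_val]; rfl
    _ = ∑ a : ZMod n, ZMod.stdAddChar (m * a ^ 2) := ZMod.sum_range_natCast n fun a => ZMod.stdAddChar (m * a ^ 2)
    _ = _ := by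
      rw [sum_sq_eq_add_two_nsmul_sum h2 hQ fun y => ZMod.stdAddChar (m * y), mul_zero,
        AddChar.map_zero_eq_one, nsmul_eq_mul, Nat.cast_ofNat]

end StdAddChar

theorem paley_linearization_eigenvalues_gauss_sums_general
    (n : ℕ) (hp : n.Prime) (h4 : n % 4 = 1) [NeZero n]
    (α : ℕ)
    (Q : Finset (ZMod n))
    (hQ : ∀ a : ZMod n, a ∈ Q ↔ (a ≠ 0 ∧ ∃ x : ZMod n, x ^ 2 = a))
    (deltaS : ZMod n → ZMod n → ℂ)
    (hdelta : ∀ q x : ZMod n, deltaS q x =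
      if x ∈ Q then
        ((((-1 : ℝ) ^ α * 2 * Real.pi / Q.card) *
          Real.cos (2 * Real.pi * ((q.val * x.val : ℕ) : ℝ) / n) : ℝ) : ℂ)
      else 0)
    (B : ZMod n → (ZMod n → ℂ) → (ZMod n → ℂ))
    (hB : ∀ (q : ZMod n) (η : ZMod n → ℂ) (x : ZMod n),
      B q η x = (∑ y : ZMod n, deltaS q y * η (x - y)) - (∑ y ∈ Q, deltaS q y) * η x)
    (e : ZMod n → ZMod n → ℂ)
    (he : ∀ x y : ZMod n,
      e x y = Complex.exp (2 * Real.pi * Complex.I * ((x.val * y.val : ℕ) : ℂ) / n))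
    (G : ZMod n → ℂ)
    (hG : ∀ x : ZMod n, G x = ∑ k ∈ Finset.range n,
      Complex.exp (2 * Real.pi * Complex.I * ((x.val * k ^ 2 : ℕ) : ℂ) / n)) :
    ∀ q x : ZMod n, B q (e x) =
      (((((-1 : ℝ) ^ α * Real.pi / ((n : ℝ) - 1)) : ℝ) : ℂ) *
        (G (q + x) - 2 * G q + G (q - x))) • e x := by
  intro q x
  have : Fact n.Prime := ⟨hp⟩
  set ψ : AddChar (ZMod n) ℂ := ZMod.stdAddChar
  have h2 : (2 : ZMod n) ≠ 0 := Ring.two_ne_zero (by rw [ZMod.ringChar_zmod_n]; omega)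
  have hQneg : ∀ y ∈ Q, -y ∈ Q :=
    fun _ => neg_mem_of_isSquare_neg_one hQ (ZMod.exists_sq_eq_neg_one_iff.2 (by omega))
  have hn : (n : ℂ) - 1 = 2 * #Q := by
    have hcard : ((2 * #Q + 1 : ℕ) : ℂ) = n :=
      congrArg Nat.cast ((two_mul_card_add_one_eq_card h2 hQ).trans (ZMod.card n))
    push_cast at hcard
    linear_combination -hcard
  have hGauss : ∀ m, G m = 1 + 2 * ∑ y ∈ Q, ψ (m * y) :=
    fun m => (hG m).trans (sum_range_exp_val_mul_sq h2 hQ m)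
  have hδ : ∀ y ∈ Q, deltaS q y = ((-1) ^ α * Real.pi / #Q : ℂ) * (ψ (q * y) + ψ (-(q * y))) :=
    fun y hy => by rw [hdelta, if_pos hy, Complex.ofReal_mul, ofReal_cos_val_mul_val]; push_cast; ring
  funext z
  simp only [Pi.smul_apply, hB, he, exp_val_mul_val_eq_stdAddChar, smul_eq_mul]
  rw [sum_mul_addChar_sub ψ fun y hy => by rw [hdelta, if_neg hy],
    sum_congr rfl fun y hy => by rw [hδ y hy, mul_assoc], ← mul_sum,
    sum_addChar_add_neg_mul_sub_one ψ hQneg, hGauss, hGauss, hGauss]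
  push_cast
  rw [hn]
  field_simp
  ring

/-- the eigenvalues of the linearization of the Kuramoto model on the
Paley graph `P_n` about the `q`-twisted state are expressed through Gauss sums:
`λ_x(q) = ((-1)^α π/(n-1)) (G_n(q+x) - 2 G_n(q) + G_n(q-x))`. -/
theorem paley_linearization_eigenvalues_gauss_sums
    (n : ℕ) (hp : n.Prime) (h4 : n % 4 = 1) [NeZero n]
    (α : ℕ) (hα : α = 0 ∨ α = 1)
    (Q : Finset (ZMod n))
    (hQ : ∀ a : ZMod n, a ∈ Q ↔ (a ≠ 0 ∧ ∃ x : ZMod n, x ^ 2 = a))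
    (hcard : (Q.card : ℝ) = ((n : ℝ) - 1) / 2)
    (deltaS : ZMod n → ZMod n → ℂ)
    (hdelta : ∀ q x : ZMod n, deltaS q x =
      if x ∈ Q then
        ((((-1 : ℝ) ^ α * 2 * Real.pi / Q.card) *
          Real.cos (2 * Real.pi * ((q.val * x.val : ℕ) : ℝ) / n) : ℝ) : ℂ)
      else 0)
    (B : ZMod n → (ZMod n → ℂ) → (ZMod n → ℂ))
    (hB : ∀ (q : ZMod n) (η : ZMod n → ℂ) (x : ZMod n),
      B q η x = (∑ y : ZMod n, deltaS q y * η (x - y)) - (∑ y ∈ Q, deltaS q y) * η x)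
    (e : ZMod n → ZMod n → ℂ)
    (he : ∀ x y : ZMod n,
      e x y = Complex.exp (2 * Real.pi * Complex.I * ((x.val * y.val : ℕ) : ℂ) / n))
    (G : ZMod n → ℂ)
    (hG : ∀ x : ZMod n, G x = ∑ k ∈ Finset.range n,
      Complex.exp (2 * Real.pi * Complex.I * ((x.val * k ^ 2 : ℕ) : ℂ) / n)) :
    ∀ q x : ZMod n, B q (e x) =
      (((((-1 : ℝ) ^ α * Real.pi / ((n : ℝ) - 1)) : ℝ) : ℂ) *
        (G (q + x) - 2 * G q + G (q - x))) • e x :=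
  paley_linearization_eigenvalues_gauss_sums_general n hp h4 α Q hQ deltaS hdelta B hB e he G hG
end

section
/- Let n ≡ 1 (mod 4) be prime with n ≥ 5, and let q ∈ Z_n \ {0} not be a quadratic residue modulo n. Then for the linearization of the attractively coupled (α = 0) Kuramoto model on the Paley graph P_n about the q-twisted state u_n^{(q)}, there exists x ∈ Z_n \ {0} such that the eigenvalue λ_x(q) satisfies λ_x(q) ≥ π·n^{−1/2} > 0 (the key step in the proof of Lemma 6.1, case C1, implying instability of non-residue twisted states for attractive coupling). -/
/-!
Write `ψ = e_1` for the standard additive character of `ZMod n` and `χ` for the quadratic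
character. Every character `e_q = ψ(q ·)` is an eigenvector of the convolution operator `B`, with
eigenvalue `(2π/|Q|) Σ_{y ∈ Q} Re ψ(qy) (ψ(-qy) - 1)`. For a non-residue `q` the substitution
`z = qy` turns this into a sum over the non-residues `N`, and since `N = -N` (as `n ≡ 1 mod 4`)
it equals `(2π/|Q|) Σ_{z ∈ N} (Re ψ(z)² - Re ψ(z))`. Doubling the angle expresses this through
the quadratic Gauss periods `η₊ = Σ_{residues} Re ψ`, `η₋ = Σ_N Re ψ`: one finds
`4 Σ_{z ∈ N} (Re ψ(z)² - Re ψ(z)) = n + (2 - χ(2)) (η₊ - η₋)`, while `η₊ + η₋ = -1` and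
`(η₊ - η₋)² = n` is the square of the quadratic Gauss sum. Hence `η₊ - η₋ ≥ -√n`, which gives
the bound `π/√n` once `n ≥ 16`; for `n = 5, 13` one checks `η₊ - η₋ > 0` numerically.
-/

open Finset Real

section QuadraticCharFiber

variable {F : Type*} [Field F] [Fintype F] [DecidableEq F]

variable (F) in
def quadraticCharFiber (ε : ℤ) : Finset F := {a | quadraticChar F a = ε}

@[simp]
lemma mem_quadraticCharFiber {ε : ℤ} {a : F} :
    a ∈ quadraticCharFiber F ε ↔ quadraticChar F a = ε := by
  simp [quadraticCharFiber]

lemma ne_zero_of_mem_quadraticCharFiber {ε : ℤ} (hε : ε ≠ 0) {a : F}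
    (ha : a ∈ quadraticCharFiber F ε) : a ≠ 0 := by
  rintro rfl
  rw [mem_quadraticCharFiber, quadraticChar_zero] at ha
  exact hε ha.symm

lemma mem_quadraticCharFiber_one {a : F} :
    a ∈ quadraticCharFiber F 1 ↔ a ≠ 0 ∧ IsSquare a := by
  refine ⟨fun ha ↦ ?_, fun ⟨ha0, hsq⟩ ↦ mem_quadraticCharFiber.2 <|
    (quadraticChar_one_iff_isSquare ha0).2 hsq⟩
  have ha0 := ne_zero_of_mem_quadraticCharFiber one_ne_zero ha
  exact ⟨ha0, (quadraticChar_one_iff_isSquare ha0).1 (mem_quadraticCharFiber.1 ha)⟩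

lemma sum_quadraticCharFiber_mul {M : Type*} [AddCommMonoid M] {u : F} (hu : u ≠ 0) (ε : ℤ)
    (f : F → M) :
    ∑ z ∈ quadraticCharFiber F ε, f (u * z) =
      ∑ z ∈ quadraticCharFiber F (quadraticChar F u * ε), f z := by
  have hχ : quadraticChar F u⁻¹ * quadraticChar F u = 1 := by
    rw [← map_mul, inv_mul_cancel₀ hu, map_one]
  refine sum_nbij' (u * ·) (u⁻¹ * ·) (fun a ha ↦ ?_) (fun a ha ↦ ?_) (fun a _ ↦ ?_)
    (fun a _ ↦ ?_) (fun _ _ ↦ rfl)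
  · rw [mem_quadraticCharFiber] at ha ⊢
    rw [map_mul, ha]
  · rw [mem_quadraticCharFiber] at ha ⊢
    rw [map_mul, ha, ← mul_assoc, hχ, one_mul]
  · simp [← mul_assoc, inv_mul_cancel₀ hu]
  · simp [← mul_assoc, mul_inv_cancel₀ hu]

lemma sum_quadraticCharFiber_neg {M : Type*} [AddCommMonoid M] (h : IsSquare (-1 : F)) (ε : ℤ)
    (f : F → M) :
    ∑ z ∈ quadraticCharFiber F ε, f (-z) = ∑ z ∈ quadraticCharFiber F ε, f z := by
  have h0 : (-1 : F) ≠ 0 := neg_ne_zero.2 one_ne_zero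
  simpa [(quadraticChar_one_iff_isSquare h0).2 h] using sum_quadraticCharFiber_mul h0 ε f

lemma sum_univ_eq_add_sum_quadraticCharFiber {M : Type*} [AddCommMonoid M] (f : F → M) :
    ∑ a, f a = f 0 + ∑ a ∈ quadraticCharFiber F 1, f a + ∑ a ∈ quadraticCharFiber F (-1), f a := by
  have hdisj : Disjoint (quadraticCharFiber F 1) (quadraticCharFiber F (-1)) := by
    rw [disjoint_left]
    intro a h1 h2
    rw [mem_quadraticCharFiber] at h1 h2
    omega
  have hunion : quadraticCharFiber F 1 ∪ quadraticCharFiber F (-1) = univ.erase 0 := by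
    ext a
    simp only [mem_union, mem_quadraticCharFiber, mem_erase, mem_univ, and_true]
    refine ⟨?_, quadraticChar_dichotomy⟩
    rintro (h | h) rfl <;> simp at h
  rw [add_assoc, ← sum_union hdisj, hunion, add_sum_erase _ f (mem_univ 0)]

lemma card_quadraticCharFiber_neg_one (hF : ringChar F ≠ 2) :
    #(quadraticCharFiber F (-1)) = #(quadraticCharFiber F 1) := by
  obtain ⟨u, hu⟩ := quadraticChar_exists_neg_one hF
  have hu0 : u ≠ 0 := ne_zero_of_mem_quadraticCharFiber (by norm_num) (mem_quadraticCharFiber.2 hu)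
  have h := sum_quadraticCharFiber_mul hu0 1 fun _ ↦ 1
  rw [hu, mul_one] at h
  simpa only [sum_const, smul_eq_mul, mul_one] using h.symm

lemma two_mul_card_quadraticCharFiber_add_one (hF : ringChar F ≠ 2) (ε : ℤ) (hε : ε = 1 ∨ ε = -1) :
    2 * #(quadraticCharFiber F ε) + 1 = Fintype.card F := by
  have h := sum_univ_eq_add_sum_quadraticCharFiber (F := F) fun _ ↦ 1
  simp only [sum_const, card_univ, smul_eq_mul, mul_one, card_quadraticCharFiber_neg_one hF] at h
  rcases hε with rfl | rfl
  · omega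
  · rw [card_quadraticCharFiber_neg_one hF]
    omega

end QuadraticCharFiber

section AddChar

variable {G : Type*} [AddCommGroup G] [Finite G] (ψ : AddChar G ℂ)

lemma AddChar.re_map_neg (x : G) : (ψ (-x)).re = (ψ x).re := by
  rw [AddChar.map_neg_eq_conj, Complex.conj_re]

lemma AddChar.two_mul_re_sq (x : G) : 2 * (ψ x).re ^ 2 = 1 + (ψ (x + x)).re := by
  have h := Complex.normSq_eq_norm_sq (ψ x)
  rw [AddChar.norm_apply, Complex.normSq_apply] at h
  rw [AddChar.map_add_eq_mul, Complex.mul_re]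
  nlinarith

end AddChar

lemma sum_mul_addChar_sub_sub_sum_mul {G M : Type*} [AddCommGroup G] [Fintype G] [CommRing M]
    (φ : AddChar G M) {S : Finset G} {δ : G → M} (hδ : ∀ y ∉ S, δ y = 0) (w : G) :
    ∑ y, δ y * φ (w - y) - (∑ y ∈ S, δ y) * φ w = (∑ y ∈ S, δ y * (φ (-y) - 1)) * φ w := by
  rw [← sum_subset (subset_univ S) fun y _ hy ↦ by rw [hδ y hy, zero_mul], sum_mul, sum_mul,
    ← sum_sub_distrib]
  refine sum_congr rfl fun y _ ↦ ?_
  rw [sub_eq_add_neg w y, AddChar.map_add_eq_mul]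
  ring

section GaussPeriod

variable {F : Type*} [Field F] [Fintype F] [DecidableEq F] (ψ : AddChar F ℂ)

def gaussPeriod (ε : ℤ) : ℝ := ∑ z ∈ quadraticCharFiber F ε, (ψ z).re

lemma sum_quadraticCharFiber_addChar (h : IsSquare (-1 : F)) (ε : ℤ) :
    ∑ z ∈ quadraticCharFiber F ε, ψ z = gaussPeriod ψ ε := by
  have h2 : 2 * ∑ z ∈ quadraticCharFiber F ε, ψ z = 2 * (gaussPeriod ψ ε : ℂ) := by
    rw [two_mul]
    nth_rw 2 [← sum_quadraticCharFiber_neg h]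
    simp only [← sum_add_distrib, AddChar.map_neg_eq_conj, Complex.add_conj, gaussPeriod]
    push_cast
    rw [mul_sum]
  exact mul_left_cancel₀ two_ne_zero h2

lemma sum_quadraticCharFiber_re_mul_addChar_neg (h : IsSquare (-1 : F)) (ε : ℤ) :
    ∑ z ∈ quadraticCharFiber F ε, ((ψ z).re : ℂ) * ψ (-z) =
      (∑ z ∈ quadraticCharFiber F ε, (ψ z).re ^ 2 : ℝ) := by
  have h2 : 2 * ∑ z ∈ quadraticCharFiber F ε, ((ψ z).re : ℂ) * ψ (-z) =
      2 * (∑ z ∈ quadraticCharFiber F ε, (ψ z).re ^ 2 : ℝ) := by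
    rw [two_mul]
    nth_rw 2 [← sum_quadraticCharFiber_neg h]
    simp only [← sum_add_distrib, neg_neg, AddChar.map_neg_eq_conj, Complex.conj_re]
    push_cast
    rw [mul_sum]
    refine sum_congr rfl fun z _ ↦ ?_
    rw [← mul_add, add_comm, Complex.add_conj]
    push_cast
    ring
  exact mul_left_cancel₀ two_ne_zero h2

lemma gaussPeriod_one_add_gaussPeriod_neg_one (hψ : ψ ≠ 1) :
    gaussPeriod ψ 1 + gaussPeriod ψ (-1) = -1 := by
  have h := congrArg Complex.re (AddChar.sum_eq_zero_of_ne_one hψ)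
  rw [sum_univ_eq_add_sum_quadraticCharFiber, Complex.add_re, Complex.add_re, Complex.re_sum,
    Complex.re_sum, AddChar.map_zero_eq_one, Complex.one_re, Complex.zero_re] at h
  simp only [gaussPeriod]
  linarith

lemma gaussPeriod_sub_sq (hF : ringChar F ≠ 2) (h : IsSquare (-1 : F)) (hψ : ψ ≠ 1) :
    (gaussPeriod ψ 1 - gaussPeriod ψ (-1)) ^ 2 = Fintype.card F := by
  set χ := (quadraticChar F).ringHomComp (Int.castRingHom ℂ)
  have hχ : χ ≠ 1 :=
    (MulChar.ringHomComp_ne_one_iff Int.cast_injective).2 (quadraticChar_ne_one hF)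
  have hsq := gaussSum_sq hχ ((quadraticChar_isQuadratic F).comp _)
    (AddChar.IsPrimitive.of_ne_one hψ)
  have hχneg : χ (-1) = 1 := by
    simp [χ, (quadraticChar_one_iff_isSquare (neg_ne_zero.2 one_ne_zero)).2 h]
  have hg : gaussSum χ ψ = ((gaussPeriod ψ 1 - gaussPeriod ψ (-1) : ℝ) : ℂ) := by
    have hfiber (ε : ℤ) : ∑ a ∈ quadraticCharFiber F ε, χ a * ψ a =
        ε * ∑ a ∈ quadraticCharFiber F ε, ψ a := by
      rw [mul_sum]
      refine sum_congr rfl fun a ha ↦ ?_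
      rw [MulChar.ringHomComp_apply, mem_quadraticCharFiber.1 ha, eq_intCast]
    rw [gaussSum, sum_univ_eq_add_sum_quadraticCharFiber, hfiber, hfiber,
      sum_quadraticCharFiber_addChar ψ h, sum_quadraticCharFiber_addChar ψ h]
    simp [χ, sub_eq_add_neg]
  rw [hχneg, one_mul, hg] at hsq
  exact_mod_cast hsq

lemma two_mul_sum_quadraticCharFiber_re_sq (hF : ringChar F ≠ 2) (ε : ℤ) :
    2 * ∑ z ∈ quadraticCharFiber F ε, (ψ z).re ^ 2 =
      #(quadraticCharFiber F ε) + gaussPeriod ψ (quadraticChar F 2 * ε) := by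
  rw [mul_sum]
  simp only [AddChar.two_mul_re_sq, sum_add_distrib, sum_const, nsmul_eq_mul, mul_one, ← two_mul]
  rw [gaussPeriod, ← sum_quadraticCharFiber_mul (Ring.two_ne_zero hF)]

lemma four_mul_sum_quadraticCharFiber_neg_one_re_sq_sub_re (hF : ringChar F ≠ 2) (hψ : ψ ≠ 1) :
    4 * ∑ z ∈ quadraticCharFiber F (-1), ((ψ z).re ^ 2 - (ψ z).re) =
      Fintype.card F + ((2 - quadraticChar F 2 : ℤ) : ℝ) *
        (gaussPeriod ψ 1 - gaussPeriod ψ (-1)) := by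
  have hsq := two_mul_sum_quadraticCharFiber_re_sq ψ hF (-1)
  have hsum := gaussPeriod_one_add_gaussPeriod_neg_one ψ hψ
  have hcard : 2 * (#(quadraticCharFiber F (-1)) : ℝ) + 1 = Fintype.card F := by
    exact_mod_cast two_mul_card_quadraticCharFiber_add_one hF (-1) (Or.inr rfl)
  rw [sum_sub_distrib, ← gaussPeriod]
  rcases quadraticChar_dichotomy (Ring.two_ne_zero hF) with h2 | h2 <;>
    rw [h2] at hsq ⊢ <;> norm_num at hsq ⊢ <;> linarith

lemma sum_quadraticCharFiber_one_re_mul_addChar_neg_sub_one (h : IsSquare (-1 : F)) {q : F}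
    (hq : quadraticChar F q = -1) :
    ∑ y ∈ quadraticCharFiber F 1, ((ψ (q * y)).re : ℂ) * (ψ (-(q * y)) - 1) =
      (∑ z ∈ quadraticCharFiber F (-1), ((ψ z).re ^ 2 - (ψ z).re) : ℝ) := by
  have hq0 : q ≠ 0 := ne_zero_of_mem_quadraticCharFiber (by norm_num) (mem_quadraticCharFiber.2 hq)
  rw [sum_quadraticCharFiber_mul hq0 1 fun z ↦ ((ψ z).re : ℂ) * (ψ (-z) - 1), hq, mul_one]
  simp only [mul_sub, mul_one, sum_sub_distrib, sum_quadraticCharFiber_re_mul_addChar_neg ψ h]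
  push_cast
  rfl

end GaussPeriod

lemma pi_div_sqrt_le_pi_mul_add_div {n s k : ℝ} (hn : 1 < n) (hs : s ^ 2 = n) (hk : 0 ≤ k)
    (h : 0 ≤ s ∨ (k + 1) ^ 2 ≤ n) : π / √n ≤ π * (n + k * s) / (n - 1) := by
  have hr : 0 < √n := Real.sqrt_pos.2 (by linarith)
  have hr2 : √n ^ 2 = n := Real.sq_sqrt (by linarith)
  have hr1 : 1 ≤ √n := by nlinarith
  have habs : |s| = √n := by rw [← Real.sqrt_sq_eq_abs, hs]
  rw [div_le_div_iff₀ hr (by linarith), mul_assoc]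
  refine mul_le_mul_of_nonneg_left ?_ Real.pi_pos.le
  suffices n - 1 ≤ (n + k * s) * √n by linarith
  rcases h with hs0 | hkn
  · rw [abs_of_nonneg hs0] at habs
    nlinarith [mul_nonneg hk hs0]
  · have hks : k + 1 ≤ √n := Real.le_sqrt_of_sq_le hkn
    have hs' : -√n ≤ s := by rw [← habs]; exact neg_abs_le s
    nlinarith [mul_le_mul_of_nonneg_left hs' hk]

namespace ZMod

variable {N : ℕ} [NeZero N]

lemma stdAddChar_natCast_s16 (m : ℕ) :
    stdAddChar (m : ZMod N) = Complex.exp (2 * π * Complex.I * m / N) := by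
  rw [stdAddChar_apply, toCircle_natCast]

lemma re_stdAddChar_natCast (m : ℕ) :
    (stdAddChar (m : ZMod N)).re = Real.cos (2 * π * m / N) := by
  rw [stdAddChar_natCast_s16, ← Complex.exp_ofReal_mul_I_re]
  congr 2
  push_cast
  ring

lemma stdAddChar_ne_one (hN : 1 < N) : (stdAddChar : AddChar (ZMod N) ℂ) ≠ 1 := by
  have : Nontrivial (ZMod N) := ZMod.nontrivial_iff.2 hN.ne'
  simpa using isPrimitive_stdAddChar N one_ne_zero

end ZMod

lemma gaussPeriod_stdAddChar_five [Fact (Nat.Prime 5)] :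
    0 ≤ gaussPeriod (ZMod.stdAddChar (N := 5)) 1 := by
  have hfiber : quadraticCharFiber (ZMod 5) 1 = {1, -1} := by decide +revert
  rw [gaussPeriod, hfiber, sum_pair (by decide +revert), AddChar.re_map_neg]
  have h1 := ZMod.re_stdAddChar_natCast (N := 5) 1
  rw [Nat.cast_one] at h1
  rw [h1]
  have := cos_nonneg_of_mem_Icc (x := 2 * π * (1 : ℕ) / (5 : ℕ))
    ⟨by push_cast; linarith [pi_pos], by push_cast; linarith [pi_pos]⟩
  linarith

lemma gaussPeriod_stdAddChar_thirteen [Fact (Nat.Prime 13)] :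
    0 ≤ gaussPeriod (ZMod.stdAddChar (N := 13)) 1 := by
  have hfiber : quadraticCharFiber (ZMod 13) 1 = {1, -1, 3, -3, 4, -4} := by decide +revert
  rw [gaussPeriod, hfiber, sum_insert (by decide +revert), sum_insert (by decide +revert),
    sum_insert (by decide +revert), sum_insert (by decide +revert), sum_pair (by decide +revert)]
  simp only [AddChar.re_map_neg]
  have h1 := ZMod.re_stdAddChar_natCast (N := 13) 1
  have h3 := ZMod.re_stdAddChar_natCast (N := 13) 3
  have h4 := ZMod.re_stdAddChar_natCast (N := 13) 4
  simp only [Nat.cast_one, Nat.cast_ofNat] at h1 h3 h4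
  rw [h1, h3, h4]
  have hc1 : cos (π / 3) ≤ cos (2 * π * 1 / 13) :=
    cos_le_cos_of_nonneg_of_le_pi (by positivity) (by linarith [pi_pos]) (by linarith [pi_pos])
  have hc3 : 0 ≤ cos (2 * π * 3 / 13) :=
    cos_nonneg_of_mem_Icc ⟨by linarith [pi_pos], by linarith [pi_pos]⟩
  have hc4 : cos (π - π / 3) ≤ cos (2 * π * 4 / 13) :=
    cos_le_cos_of_nonneg_of_le_pi (by positivity) (by linarith [pi_pos]) (by linarith [pi_pos])
  rw [cos_pi_sub, cos_pi_div_three] at hc4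
  rw [cos_pi_div_three] at hc1
  linarith

-- By Gauss's sign theorem `η₊ - η₋ = √p`; the estimate needs the sign only for `p < 16`.
lemma gaussPeriod_stdAddChar_one_nonneg_of_lt_sixteen {p : ℕ} [Fact p.Prime] (h4 : p % 4 = 1)
    (h16 : p < 16) : 0 ≤ gaussPeriod (ZMod.stdAddChar (N := p)) 1 := by
  have hp : p.Prime := Fact.out
  obtain rfl | rfl : p = 5 ∨ p = 13 := by
    interval_cases p <;> first | omega | norm_num at hp
  · exact gaussPeriod_stdAddChar_five
  · exact gaussPeriod_stdAddChar_thirteen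

/-- The eigenvalue `λ_q(q)` for a non-residue `q`; by the substitution `z = q y` it does not
depend on `q`. -/
noncomputable def paleyNonresidueEigenvalue (p : ℕ) [Fact p.Prime] : ℝ :=
  2 * π / #(quadraticCharFiber (ZMod p) 1) *
    ∑ z ∈ quadraticCharFiber (ZMod p) (-1), ((ZMod.stdAddChar z).re ^ 2 - (ZMod.stdAddChar z).re)

lemma pi_div_sqrt_le_paleyNonresidueEigenvalue {p : ℕ} [Fact p.Prime] (h4 : p % 4 = 1) :
    π / √p ≤ paleyNonresidueEigenvalue p := by
  set ψ : AddChar (ZMod p) ℂ := ZMod.stdAddChar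
  have hp : p.Prime := Fact.out
  have hF : ringChar (ZMod p) ≠ 2 := by rw [ZMod.ringChar_zmod_n]; omega
  have hψ : ψ ≠ 1 := ZMod.stdAddChar_ne_one hp.one_lt
  set s := gaussPeriod ψ 1 - gaussPeriod ψ (-1)
  set k : ℝ := ((2 - quadraticChar (ZMod p) 2 : ℤ) : ℝ)
  have hT := ZMod.card p ▸ four_mul_sum_quadraticCharFiber_neg_one_re_sq_sub_re ψ hF hψ
  have hs : s ^ 2 = p := ZMod.card p ▸ gaussPeriod_sub_sq ψ hF
    (ZMod.exists_sq_eq_neg_one_iff.2 (by omega)) hψ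
  have hcard : 2 * (#(quadraticCharFiber (ZMod p) 1) : ℝ) + 1 = p := by
    exact_mod_cast ZMod.card p ▸ two_mul_card_quadraticCharFiber_add_one hF 1 (Or.inl rfl)
  have hk : k = 1 ∨ k = 3 := by
    rcases quadraticChar_dichotomy (Ring.two_ne_zero hF) with h2 | h2 <;> norm_num [k, h2]
  have hsign : 0 ≤ s ∨ (k + 1) ^ 2 ≤ p := by
    by_cases h16 : p < 16
    · have := gaussPeriod_stdAddChar_one_nonneg_of_lt_sixteen h4 h16
      have := gaussPeriod_one_add_gaussPeriod_neg_one ψ hψ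
      left
      linarith
    · have : (16 : ℝ) ≤ p := by exact_mod_cast not_lt.1 h16
      right
      rcases hk with h | h <;> rw [h] <;> linarith
  convert pi_div_sqrt_le_pi_mul_add_div (by exact_mod_cast hp.one_lt) hs
    (by rcases hk with h | h <;> rw [h] <;> norm_num) hsign using 1
  rw [paleyNonresidueEigenvalue, ← hT, ← hcard]
  field_simp
  ring

theorem paley_nonresidue_twisted_state_positive_eigenvalue_general
    (n : ℕ) (hp : n.Prime) (h4 : n % 4 = 1) [NeZero n]
    (Q : Finset (ZMod n))
    (hQ : ∀ a : ZMod n, a ∈ Q ↔ (a ≠ 0 ∧ ∃ x : ZMod n, x ^ 2 = a))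
    (q : ZMod n) (hq0 : q ≠ 0) (hqnr : ¬ ∃ y : ZMod n, y ^ 2 = q)
    (deltaS : ZMod n → ℂ)
    (hdelta : ∀ x : ZMod n, deltaS x =
      if x ∈ Q then
        (((2 * Real.pi / Q.card) *
          Real.cos (2 * Real.pi * ((q.val * x.val : ℕ) : ℝ) / n) : ℝ) : ℂ)
      else 0)
    (B : (ZMod n → ℂ) → (ZMod n → ℂ))
    (hB : ∀ (η : ZMod n → ℂ) (x : ZMod n),
      B η x = (∑ y : ZMod n, deltaS y * η (x - y)) - (∑ y ∈ Q, deltaS y) * η x)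
    (e : ZMod n → ZMod n → ℂ)
    (he : ∀ x y : ZMod n,
      e x y = Complex.exp (2 * Real.pi * Complex.I * ((x.val * y.val : ℕ) : ℂ) / n)) :
    ∃ x : ZMod n, x ≠ 0 ∧ ∃ lam : ℝ,
      B (e x) = ((lam : ℝ) : ℂ) • e x ∧
      Real.pi / Real.sqrt n ≤ lam ∧ 0 < lam := by
  have : Fact n.Prime := ⟨hp⟩
  set ψ : AddChar (ZMod n) ℂ := ZMod.stdAddChar
  have hQ1 : Q = quadraticCharFiber (ZMod n) 1 := by
    ext a
    simp only [hQ, mem_quadraticCharFiber_one, IsSquare, sq, eq_comm]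
  have hq : quadraticChar (ZMod n) q = -1 :=
    quadraticChar_neg_one_iff_not_isSquare.2 fun ⟨r, hr⟩ ↦ hqnr ⟨r, by rw [hr, sq]⟩
  have heq : e q = ψ.mulShift q := by
    funext y
    rw [he, AddChar.mulShift_apply, ← ZMod.stdAddChar_natCast_s16]
    simp [ψ]
  have hδ (y : ZMod n) :
      deltaS y = if y ∈ Q then ((2 * π / #Q : ℝ) : ℂ) * (ψ (q * y)).re else 0 := by
    rw [hdelta, ← ZMod.re_stdAddChar_natCast]
    simp [ψ]
  have heig : ∑ y ∈ Q, deltaS y * (ψ.mulShift q (-y) - 1) = paleyNonresidueEigenvalue n := by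
    rw [paleyNonresidueEigenvalue, ← hQ1, Complex.ofReal_mul,
      ← sum_quadraticCharFiber_one_re_mul_addChar_neg_sub_one ψ
        (ZMod.exists_sq_eq_neg_one_iff.2 (by omega)) hq, mul_sum, ← hQ1]
    refine sum_congr rfl fun y hy ↦ ?_
    rw [hδ, if_pos hy, AddChar.mulShift_apply, mul_neg, mul_assoc]
  have hlow := pi_div_sqrt_le_paleyNonresidueEigenvalue h4
  refine ⟨q, hq0, paleyNonresidueEigenvalue n, ?_, hlow,
    (div_pos pi_pos (sqrt_pos.2 (by exact_mod_cast hp.pos))).trans_le hlow⟩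
  funext w
  rw [hB, heq, sum_mul_addChar_sub_sub_sum_mul _ (fun y hy ↦ by rw [hδ, if_neg hy]), heig]
  rfl

/-- key step of Lemma 6.1, case C1: for prime `n ≡ 1 (mod 4)`, `n ≥ 5`,
and `q ≠ 0` not a quadratic residue mod `n`, the linearization of the attractively
coupled (`α = 0`) Kuramoto model on the Paley graph about the `q`-twisted state has an
eigenvalue `λ_x(q) ≥ π n^{-1/2} > 0` for some `x ≠ 0`. -/
theorem paley_nonresidue_twisted_state_positive_eigenvalue
    (n : ℕ) (hp : n.Prime) (h4 : n % 4 = 1) (hn5 : 5 ≤ n) [NeZero n]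
    (Q : Finset (ZMod n))
    (hQ : ∀ a : ZMod n, a ∈ Q ↔ (a ≠ 0 ∧ ∃ x : ZMod n, x ^ 2 = a))
    (q : ZMod n) (hq0 : q ≠ 0) (hqnr : ¬ ∃ y : ZMod n, y ^ 2 = q)
    (deltaS : ZMod n → ℂ)
    (hdelta : ∀ x : ZMod n, deltaS x =
      if x ∈ Q then
        (((2 * Real.pi / Q.card) *
          Real.cos (2 * Real.pi * ((q.val * x.val : ℕ) : ℝ) / n) : ℝ) : ℂ)
      else 0)
    (B : (ZMod n → ℂ) → (ZMod n → ℂ))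
    (hB : ∀ (η : ZMod n → ℂ) (x : ZMod n),
      B η x = (∑ y : ZMod n, deltaS y * η (x - y)) - (∑ y ∈ Q, deltaS y) * η x)
    (e : ZMod n → ZMod n → ℂ)
    (he : ∀ x y : ZMod n,
      e x y = Complex.exp (2 * Real.pi * Complex.I * ((x.val * y.val : ℕ) : ℂ) / n)) :
    ∃ x : ZMod n, x ≠ 0 ∧ ∃ lam : ℝ,
      B (e x) = ((lam : ℝ) : ℂ) • e x ∧
      Real.pi / Real.sqrt n ≤ lam ∧ 0 < lam :=
  paley_nonresidue_twisted_state_positive_eigenvalue_general n hp h4 Q hQ q hq0 hqnr deltaS hdelta B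
    hB e he
end

section
/- Fix p ∈ (0,1), q ∈ ℕ ∪ {0}, and i ∈ ℕ. For each n ≥ i, let a_{nij}, j ∈ [n], be independent identically distributed Bernoulli(p) random variables on a common probability space. Then (np)^{−1} Σ_{j=1}^n a_{nij} sin(2πq(j−i)/n) → 0 almost surely as n → ∞; that is, in the limit of large n the q-twisted states become steady states of the Kuramoto model on the Erdős–Rényi graph G(n,p) almost surely (Theorem 7.3). -/
/-!
The phases of a twisted state are equally spaced around the circle, so
`∑_j sin (2πq(j - i)/n) = 0` and the Kuramoto sum equals `∑_j (a_{nj} - p) sin (2πq(j - i)/n)`,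
a sum of `n` independent centred variables, each a `[0, 1]`-valued variable minus its mean times
a weight of modulus at most `1`. Hoeffding's inequality bounds the probability that this sum
exceeds `npδ` in absolute value by `2 exp (-2 n p² δ²)`, which is summable in `n`; Borel–Cantelli
then gives almost sure convergence.
-/

open MeasureTheory Filter Real
open scoped NNReal Topology

-- The sum is the imaginary part of a character sum over `ZMod n`, which is `0` or `n`.
theorem sum_sin_two_pi_mul_div_eq_zero (n : ℕ) (q c : ℤ) :
    ∑ j : Fin n, sin (2 * π * q * ((j : ℕ) + c) / n) = 0 := by
  rcases Nat.eq_zero_or_pos n with rfl | hn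
  · simp
  have : NeZero n := ⟨hn.ne'⟩
  set ψ : AddChar (ZMod n) ℂ := ZMod.stdAddChar.mulShift q
  have hψ (m : ℤ) : sin (2 * π * q * m / n) = (ψ m).im := by
    rw [AddChar.mulShift_apply, ← Int.cast_mul, ZMod.stdAddChar_coe,
      ← Complex.exp_ofReal_mul_I_im]
    push_cast
    ring_nf
  have hbij : Function.Bijective fun j : Fin n => ((j : ℕ) : ZMod n) + c := by
    rw [Fintype.bijective_iff_injective_and_card, ZMod.card, Fintype.card_fin]
    refine ⟨fun j k hjk => Fin.ext ?_, rfl⟩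
    simpa [ZMod.natCast_eq_natCast_iff', Nat.mod_eq_of_lt j.2, Nat.mod_eq_of_lt k.2] using hjk
  calc ∑ j : Fin n, sin (2 * π * q * ((j : ℕ) + c) / n)
      = (∑ x, ψ x).im := by
        rw [Complex.im_sum, ← Fintype.sum_bijective _ hbij
          (fun j => (ψ (((j : ℕ) : ZMod n) + c)).im) _ fun _ => rfl]
        exact Fintype.sum_congr _ _ fun j => by simpa using hψ ((j : ℕ) + c)
    _ = 0 := by
        classical
        rw [AddChar.sum_eq_ite]
        split_ifs <;> simp

theorem mul_le_abs_of_le_abs_inv_mul {c δ x : ℝ} (hc : 0 ≤ c) (h : δ ≤ |c⁻¹ * x|) :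
    c * δ ≤ |x| := by
  rcases hc.eq_or_lt with rfl | hc
  · simp
  · rwa [abs_mul, abs_of_pos (inv_pos.2 hc), ← div_eq_inv_mul, le_div_iff₀ hc, mul_comm] at h

section Probability

open ProbabilityTheory

variable {Ω : Type*} [MeasurableSpace Ω] {μ : Measure Ω}

theorem integral_eq_measureReal_of_forall_eq_zero_or_one {f : Ω → ℝ} (hf : Measurable f)
    (h01 : ∀ ω, f ω = 0 ∨ f ω = 1) : ∫ ω, f ω ∂μ = μ.real {ω | f ω = 1} := by
  change _ = μ.real (f ⁻¹' {1})
  rw [← integral_indicator_one (hf (measurableSet_singleton 1))]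
  refine integral_congr_ae (ae_of_all _ fun ω => ?_)
  rcases h01 ω with h | h <;> simp [h]

theorem ProbabilityTheory.HasSubgaussianMGF.mono {X : Ω → ℝ} {c d : ℝ≥0}
    (h : HasSubgaussianMGF X c μ) (hcd : c ≤ d) : HasSubgaussianMGF X d μ :=
  ⟨h.integrable_exp_mul, fun t => (h.mgf_le t).trans <| exp_le_exp.2 <| by gcongr⟩

theorem measureReal_abs_sum_ge_le_of_iIndepFun {ι : Type*} {X : ι → Ω → ℝ}
    (h_indep : iIndepFun X μ) {c : ι → ℝ≥0} {s : Finset ι}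
    (h_subG : ∀ i ∈ s, HasSubgaussianMGF (X i) (c i) μ) {ε : ℝ} (hε : 0 ≤ ε) :
    μ.real {ω | ε ≤ |∑ i ∈ s, X i ω|} ≤ 2 * exp (-ε ^ 2 / (2 * ∑ i ∈ s, c i)) := by
  have := h_indep.isProbabilityMeasure
  have h_upper := HasSubgaussianMGF.measure_sum_ge_le_of_iIndepFun h_indep h_subG hε
  have h_lower := HasSubgaussianMGF.measure_sum_ge_le_of_iIndepFun (X := fun i => -X i)
    (h_indep.comp (fun _ x => -x) fun _ => measurable_neg) (fun i hi => (h_subG i hi).neg) hε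
  simp only [Pi.neg_apply, Finset.sum_neg_distrib] at h_lower
  calc μ.real {ω | ε ≤ |∑ i ∈ s, X i ω|}
      ≤ μ.real ({ω | ε ≤ ∑ i ∈ s, X i ω} ∪ {ω | ε ≤ -∑ i ∈ s, X i ω}) :=
        measureReal_mono fun _ hω => le_abs.1 (Set.mem_ofPred.1 hω)
    _ ≤ _ := (measureReal_union_le _ _).trans (by linarith)

theorem measureReal_abs_sum_mul_sub_integral_ge_le {ι : Type*} {X : ι → Ω → ℝ}
    (h_indep : iIndepFun X μ) (hm : ∀ i, AEMeasurable (X i) μ)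
    (hX : ∀ i, ∀ᵐ ω ∂μ, X i ω ∈ Set.Icc 0 1) (w : ι → ℝ) (hw : ∀ i, |w i| ≤ 1)
    (s : Finset ι) {ε : ℝ} (hε : 0 ≤ ε) :
    μ.real {ω | ε ≤ |∑ i ∈ s, w i * (X i ω - μ[X i])|} ≤ 2 * exp (-2 * ε ^ 2 / s.card) := by
  have := h_indep.isProbabilityMeasure
  have h_subG (i : ι) : HasSubgaussianMGF (fun ω => w i * (X i ω - μ[X i])) (1 / 4) μ := by
    refine ((hasSubgaussianMGF_of_mem_Icc (hm i) (hX i)).const_mul (w i)).mono ?_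
    have hw2 : w i ^ 2 ≤ 1 := (sq_le_one_iff_abs_le_one _).2 (hw i)
    refine (mul_le_of_le_one_left' (by exact hw2)).trans_eq ?_
    norm_num
  have h_indep' : iIndepFun (fun i ω => w i * (X i ω - μ[X i])) μ :=
    h_indep.comp (fun i (x : ℝ) => w i * (x - ∫ ω, X i ω ∂μ)) fun i => by fun_prop
  convert measureReal_abs_sum_ge_le_of_iIndepFun h_indep' (fun i _ => h_subG i) hε using 3
  simp
  ring

theorem measureReal_abs_sum_mul_ge_le_of_sum_eq_zero {ι : Type*} {X : ι → Ω → ℝ}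
    (h_indep : iIndepFun X μ) (hm : ∀ i, AEMeasurable (X i) μ)
    (hX : ∀ i, ∀ᵐ ω ∂μ, X i ω ∈ Set.Icc 0 1) {m : ℝ} (hmean : ∀ i, μ[X i] = m) {w : ι → ℝ}
    (hw : ∀ i, |w i| ≤ 1) {s : Finset ι} (hs : ∑ i ∈ s, w i = 0) {ε : ℝ} (hε : 0 ≤ ε) :
    μ.real {ω | ε ≤ |∑ i ∈ s, X i ω * w i|} ≤ 2 * exp (-2 * ε ^ 2 / s.card) := by
  have h_centred (ω : Ω) : ∑ i ∈ s, X i ω * w i = ∑ i ∈ s, w i * (X i ω - μ[X i]) := by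
    simp only [hmean, mul_comm (w _), sub_mul, Finset.sum_sub_distrib, ← Finset.mul_sum, hs,
      mul_zero, sub_zero]
  simp_rw [h_centred]
  exact measureReal_abs_sum_mul_sub_integral_ge_le h_indep hm hX w hw s hε

theorem ae_tendsto_zero_of_summable_measureReal_abs_ge [IsFiniteMeasure μ] {Z : ℕ → Ω → ℝ}
    (h : ∀ δ > 0, Summable fun n => μ.real {ω | δ ≤ |Z n ω|}) :
    ∀ᵐ ω ∂μ, Tendsto (fun n => Z n ω) atTop (𝓝 0) := by
  have h_ev (k : ℕ) : ∀ᵐ ω ∂μ, ∀ᶠ n in atTop, ω ∉ {ω | 1 / ((k : ℝ) + 1) ≤ |Z n ω|} := by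
    refine ae_eventually_notMem ?_
    refine ne_of_eq_of_ne (tsum_congr fun n => (ofReal_measureReal (measure_ne_top μ _)).symm) ?_
    rw [← ENNReal.ofReal_tsum_of_nonneg (fun _ => measureReal_nonneg) (h _ Nat.one_div_pos_of_nat)]
    exact ENNReal.ofReal_ne_top
  filter_upwards [ae_all_iff.2 h_ev] with ω hω
  refine NormedAddGroup.tendsto_nhds_zero.2 fun ε hε => ?_
  obtain ⟨k, hk⟩ := exists_nat_one_div_lt hε
  filter_upwards [hω k] with n hn
  simp only [not_le] at hn
  rw [Real.norm_eq_abs]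
  linarith

end Probability

theorem twisted_states_almost_sure_steady_states_general
    {Ω : Type*} [MeasurableSpace Ω] (ℙ : Measure Ω) [IsProbabilityMeasure ℙ]
    (p : ℝ) (hp : p ∈ Set.Ioo (0 : ℝ) 1)
    (q : ℕ) (i : ℕ)
    (a : (n : ℕ) → Fin n → Ω → ℝ)
    (hmeas : ∀ (n : ℕ), i ≤ n → ∀ j : Fin n, Measurable (a n j))
    (h01 : ∀ (n : ℕ), i ≤ n → ∀ (j : Fin n) (ω : Ω), a n j ω = 0 ∨ a n j ω = 1)
    (hbern : ∀ (n : ℕ), i ≤ n → ∀ j : Fin n, ℙ {ω | a n j ω = 1} = ENNReal.ofReal p)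
    (hind : ∀ (n : ℕ), i ≤ n →
      ProbabilityTheory.iIndepFun (a n) ℙ) :
    ∀ᵐ ω ∂ℙ, Filter.Tendsto (fun n : ℕ =>
      ((n : ℝ) * p)⁻¹ * ∑ j : Fin n,
        a n j ω * Real.sin (2 * Real.pi * q * (((j : ℕ) : ℝ) + 1 - i) / n))
      Filter.atTop (nhds 0) := by
  have hmean : ∀ n, i ≤ n → ∀ j, ∫ ω, a n j ω ∂ℙ = p := fun n hn j => by
    rw [integral_eq_measureReal_of_forall_eq_zero_or_one (hmeas n hn j) (h01 n hn j),
      measureReal_def, hbern n hn j, ENNReal.toReal_ofReal hp.1.le]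
  refine ae_tendsto_zero_of_summable_measureReal_abs_ge fun δ hδ => ?_
  have hr : exp (-2 * (p * δ) ^ 2) < 1 := exp_lt_one_iff.2 (by nlinarith [mul_pos hp.1 hδ])
  refine Summable.of_norm_bounded_eventually_nat
    ((summable_geometric_of_lt_one (exp_nonneg _) hr).mul_left 2) ?_
  filter_upwards [eventually_ge_atTop i] with n hn
  have h_sin : ∑ j : Fin n, sin (2 * π * q * (((j : ℕ) : ℝ) + 1 - i) / n) = 0 := by
    simpa [add_sub_assoc] using sum_sin_two_pi_mul_div_eq_zero n q (1 - i)
  rw [norm_of_nonneg measureReal_nonneg]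
  calc _ ≤ ℙ.real {ω | n * p * δ ≤ |∑ j : Fin n,
          a n j ω * sin (2 * π * q * (((j : ℕ) : ℝ) + 1 - i) / n)|} :=
        measureReal_mono fun _ => mul_le_abs_of_le_abs_inv_mul (by positivity [hp.1])
    _ ≤ 2 * exp (-2 * (n * p * δ) ^ 2 / n) := by
        simpa using measureReal_abs_sum_mul_ge_le_of_sum_eq_zero (hind n hn)
          (fun j => (hmeas n hn j).aemeasurable)
          (fun j => ae_of_all _ fun ω => by rcases h01 n hn j ω with h | h <;> simp [h])
          (hmean n hn) (fun _ => abs_sin_le_one _) h_sin (by positivity [hp.1])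
    _ = 2 * exp (-2 * (p * δ) ^ 2) ^ n := by
        rw [← exp_nat_mul]
        rcases n.eq_zero_or_pos with rfl | hn0
        · simp
        · field_simp

/-- Theorem 7.3: if for each `n ≥ i` the random variables
`a_{nij}, j ∈ [n]`, are i.i.d. Bernoulli(p), then
`(np)⁻¹ ∑_{j=1}^n a_{nij} sin(2πq(j-i)/n) → 0` almost surely as `n → ∞`; i.e., in the
large-`n` limit the `q`-twisted states become steady states of the Kuramoto model on
the Erdős–Rényi graph `G(n,p)` almost surely. -/
theorem twisted_states_almost_sure_steady_states
    {Ω : Type*} [MeasurableSpace Ω] (ℙ : Measure Ω) [IsProbabilityMeasure ℙ]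
    (p : ℝ) (hp : p ∈ Set.Ioo (0 : ℝ) 1)
    (q : ℕ) (i : ℕ) (hi : 1 ≤ i)
    (a : (n : ℕ) → Fin n → Ω → ℝ)
    (hmeas : ∀ (n : ℕ), i ≤ n → ∀ j : Fin n, Measurable (a n j))
    (h01 : ∀ (n : ℕ), i ≤ n → ∀ (j : Fin n) (ω : Ω), a n j ω = 0 ∨ a n j ω = 1)
    (hbern : ∀ (n : ℕ), i ≤ n → ∀ j : Fin n, ℙ {ω | a n j ω = 1} = ENNReal.ofReal p)
    (hind : ∀ (n : ℕ), i ≤ n →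
      ProbabilityTheory.iIndepFun (a n) ℙ) :
    ∀ᵐ ω ∂ℙ, Filter.Tendsto (fun n : ℕ =>
      ((n : ℝ) * p)⁻¹ * ∑ j : Fin n,
        a n j ω * Real.sin (2 * Real.pi * q * (((j : ℕ) : ℝ) + 1 - i) / n))
      Filter.atTop (nhds 0) :=
  twisted_states_almost_sure_steady_states_general ℙ p hp q i a hmeas h01 hbern hind
end

section
/- Consider the Kuramoto model on the Erdős–Rényi graph G(n,p): du_{ni}/dt = ((−1)^α/(np)) Σ_{j=1}^n a_{nij} sin(2π(u_{nj} − u_{ni})), i ∈ [n], with α ∈ {0,1} and p ∈ (0,1). Then for every ε_1, ε_2 ∈ (0,1), every T > 0, and every integer q ≥ 1, there exists N = N(ε_1, ε_2) such that for every n ≥ N one can find δ = δ(n, ε_2) > 0 with the following property: if ‖u_n(0) − u_n^{(q)}‖_{2,n} < δ, then P{ max_{t∈[0,T]} ‖u_n(t) − u_n^{(q)}‖_{2,n} > ε_1 } < ε_2; i.e., twisted states are metastable for the Kuramoto model on large Erdős–Rényi graphs (Theorem 7.4). -/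
/-!
Whatever the graph, the Kuramoto vector field `F` is `K`-Lipschitz for `‖·‖_{2,n}` with
`K = 4π/p`, so by Grönwall a solution starting `δ`-close to a state `v` stays within `2δ e^{KT}`
of it on `[0, T]` as long as the drift `‖F v‖_{2,n}` is at most `Kδ`. The twisted state is an
equilibrium of the model on the complete graph (`∑_j sin (2πq(j - i)/n) = 0`), so on `G(n,p)`
each coordinate of the drift at it is a centred sum of independent Bernoulli variables; the
drift therefore has second moment at most `1/(np)`, and Markov's inequality makes a drift of
size `Kδ` improbable for large `n`.
-/

open MeasureTheory

/-- The weighted Euclidean norm `‖w‖_{2,n} = (n⁻¹ ∑ w_i²)^{1/2}` on `ℝ^n`. -/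
noncomputable def norm2n (n : ℕ) (w : Fin n → ℝ) : ℝ :=
  Real.sqrt ((n : ℝ)⁻¹ * ∑ i : Fin n, (w i) ^ 2)

open Real

section norm2n

variable {n : ℕ}

theorem norm2n_eq_norm (w : Fin n → ℝ) :
    norm2n n w = ‖(√n)⁻¹ • WithLp.toLp 2 w‖ := by
  rw [norm_smul, EuclideanSpace.norm_eq, norm2n, norm_inv, norm_of_nonneg (sqrt_nonneg _),
    ← sqrt_inv, ← sqrt_mul (by positivity)]
  simp [Real.norm_eq_abs, sq_abs]

theorem norm2n_nonneg (w : Fin n → ℝ) : 0 ≤ norm2n n w := sqrt_nonneg _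

theorem sq_norm2n (w : Fin n → ℝ) : norm2n n w ^ 2 = (n : ℝ)⁻¹ * ∑ i, w i ^ 2 :=
  sq_sqrt (by positivity)

theorem norm2n_add_le (v w : Fin n → ℝ) : norm2n n (v + w) ≤ norm2n n v + norm2n n w := by
  simp only [norm2n_eq_norm, WithLp.toLp_add, smul_add]
  exact norm_add_le _ _

theorem norm2n_const_mul (c : ℝ) (w : Fin n → ℝ) :
    norm2n n (fun i => c * w i) = |c| * norm2n n w := by
  rw [norm2n_eq_norm, norm2n_eq_norm, ← Real.norm_eq_abs, ← norm_smul, smul_comm]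
  rfl

theorem norm2n_abs (w : Fin n → ℝ) : norm2n n (fun i => |w i|) = norm2n n w := by
  simp [norm2n, sq_abs]

theorem norm2n_le_of_abs_le {v w : Fin n → ℝ} (h : ∀ i, |v i| ≤ w i) :
    norm2n n v ≤ norm2n n w := by
  refine sqrt_le_sqrt (mul_le_mul_of_nonneg_left (Finset.sum_le_sum fun i _ => ?_) (by positivity))
  exact sq_le_sq' (abs_le.1 (h i)).1 (abs_le.1 (h i)).2

theorem norm2n_const_le (c : ℝ) : norm2n n (fun _ => c) ≤ |c| := by
  rw [norm2n, Finset.sum_const, Finset.card_univ, Fintype.card_fin, nsmul_eq_mul, ← mul_assoc]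
  refine (sqrt_le_sqrt (mul_le_of_le_one_left (sq_nonneg c) ?_)).trans (sqrt_sq_eq_abs c).le
  exact inv_mul_le_one_of_le₀ le_rfl (Nat.cast_nonneg n)

theorem sum_abs_le_mul_norm2n (w : Fin n → ℝ) : ∑ i, |w i| ≤ n * norm2n n w := by
  rcases eq_or_ne n 0 with rfl | hn
  · simp
  refine le_of_sq_le_sq ?_ (by positivity [norm2n_nonneg w])
  calc (∑ i, |w i|) ^ 2 ≤ n * ∑ i, |w i| ^ 2 := by
        simpa using sq_sum_le_card_mul_sum_sq (s := Finset.univ) (f := fun i => |w i|)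
    _ = (n * norm2n n w) ^ 2 := by
        rw [mul_pow, sq_norm2n]
        simp only [sq_abs]
        field_simp

theorem norm2n_sub_le_gronwallBound {F : (Fin n → ℝ) → Fin n → ℝ} {v : Fin n → ℝ}
    {K δ η : ℝ} (hF : ∀ x, norm2n n (F x) ≤ K * norm2n n (x - v) + η)
    {u : ℝ → Fin n → ℝ} (hu : ∀ t, HasDerivAt u (F (u t)) t)
    (h0 : norm2n n (u 0 - v) ≤ δ) {t : ℝ} (ht : 0 ≤ t) :
    norm2n n (u t - v) ≤ gronwallBound δ K η t := by
  let L : (Fin n → ℝ) →L[ℝ] EuclideanSpace ℝ (Fin n) :=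
    (√n)⁻¹ • (EuclideanSpace.equiv (Fin n) ℝ).symm.toContinuousLinearMap
  have hL : ∀ w, norm2n n w = ‖L w‖ := norm2n_eq_norm
  have hderiv : ∀ s, HasDerivAt (fun s => L (u s - v)) (L (F (u s))) s := fun s =>
    L.hasFDerivAt.comp_hasDerivAt s ((hu s).sub_const v)
  simp only [hL] at h0 hF ⊢
  simpa using norm_le_gronwallBound_of_norm_deriv_right_le
    (fun s _ => (hderiv s).continuousAt.continuousWithinAt)
    (fun s _ => (hderiv s).hasDerivWithinAt) h0 (fun s _ => hF (u s)) t ⟨ht, le_rfl⟩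

end norm2n

theorem gronwallBound_le_two_mul_exp {δ K t T : ℝ} (hK : 0 < K) (hδ : 0 ≤ δ) (ht : t ≤ T) :
    gronwallBound δ K (K * δ) t ≤ 2 * δ * exp (K * T) := by
  have hexp : exp (K * t) ≤ exp (K * T) := exp_le_exp.2 (by gcongr)
  rw [gronwallBound_of_K_ne_0 hK.ne', mul_div_cancel_left₀ _ hK.ne']
  nlinarith [exp_pos (K * t)]

section Kuramoto

variable {n : ℕ}

noncomputable def kuramotoField (κ : ℝ) (A : Fin n → Fin n → ℝ) (u : Fin n → ℝ) :
    Fin n → ℝ :=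
  fun i => κ * ∑ j, A i j * sin (2 * π * (u j - u i))

variable {κ : ℝ} {A : Fin n → Fin n → ℝ}

theorem abs_kuramotoField_sub_le (hA : ∀ i j, |A i j| ≤ 1) (x v : Fin n → ℝ) (i : Fin n) :
    |kuramotoField κ A x i - kuramotoField κ A v i|
      ≤ 2 * π * |κ| * (∑ j, |x j - v j| + n * |x i - v i|) := by
  have hterm : ∀ j, |A i j * sin (2 * π * (x j - x i)) - A i j * sin (2 * π * (v j - v i))|
      ≤ 2 * π * (|x j - v j| + |x i - v i|) := by
    intro j
    rw [← mul_sub, abs_mul]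
    calc |A i j| * |sin (2 * π * (x j - x i)) - sin (2 * π * (v j - v i))|
        ≤ 1 * |2 * π * (x j - x i) - 2 * π * (v j - v i)| :=
          mul_le_mul (hA i j) (abs_sin_sub_sin_le _ _) (abs_nonneg _) zero_le_one
      _ = 2 * π * |(x j - v j) - (x i - v i)| := by
          rw [one_mul, ← mul_sub, abs_mul, abs_of_pos two_pi_pos, sub_sub_sub_comm]
      _ ≤ 2 * π * (|x j - v j| + |x i - v i|) := by gcongr; exact abs_sub _ _
  calc |kuramotoField κ A x i - kuramotoField κ A v i|
      = |κ| * |∑ j, (A i j * sin (2 * π * (x j - x i))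
          - A i j * sin (2 * π * (v j - v i)))| := by
        rw [kuramotoField, kuramotoField, ← mul_sub, ← Finset.sum_sub_distrib, abs_mul]
    _ ≤ |κ| * ∑ j, 2 * π * (|x j - v j| + |x i - v i|) := by
        gcongr
        exact (Finset.abs_sum_le_sum_abs _ _).trans (Finset.sum_le_sum fun j _ => hterm j)
    _ = 2 * π * |κ| * (∑ j, |x j - v j| + n * |x i - v i|) := by
        rw [← Finset.mul_sum, Finset.sum_add_distrib, Finset.sum_const, Finset.card_univ,
          Fintype.card_fin, nsmul_eq_mul]
        ring

theorem norm2n_kuramotoField_sub_le (hA : ∀ i j, |A i j| ≤ 1) (x v : Fin n → ℝ) :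
    norm2n n (kuramotoField κ A x - kuramotoField κ A v)
      ≤ 4 * π * n * |κ| * norm2n n (x - v) := by
  set C := 2 * π * |κ|
  set S := ∑ j, |(x - v) j|
  calc norm2n n (kuramotoField κ A x - kuramotoField κ A v)
      ≤ norm2n n ((fun _ => C * S) + fun i => (C * n) * |(x - v) i|) :=
        norm2n_le_of_abs_le fun i =>
          (abs_kuramotoField_sub_le hA x v i).trans_eq <| by
            simp only [Pi.sub_apply, Pi.add_apply, S]; ring
    _ ≤ C * S + (C * n) * norm2n n (x - v) := by
        refine (norm2n_add_le _ _).trans (add_le_add ((norm2n_const_le _).trans_eq ?_) ?_)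
        · exact abs_of_nonneg (by positivity)
        · rw [norm2n_const_mul, abs_of_nonneg (by positivity), norm2n_abs]
    _ ≤ C * (n * norm2n n (x - v)) + C * n * norm2n n (x - v) := by
        gcongr; exact sum_abs_le_mul_norm2n _
    _ = 4 * π * n * |κ| * norm2n n (x - v) := by ring

theorem norm2n_sub_le_two_mul_exp_of_hasDerivAt_kuramotoField {K δ T : ℝ}
    (hA : ∀ i j, |A i j| ≤ 1) (hK0 : 0 < K) (hK : 4 * π * n * |κ| ≤ K) {v : Fin n → ℝ}
    (hv : norm2n n (kuramotoField κ A v) ≤ K * δ) {u : ℝ → Fin n → ℝ}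
    (hu : ∀ t, HasDerivAt u (kuramotoField κ A (u t)) t) (h0 : norm2n n (u 0 - v) ≤ δ)
    {t : ℝ} (ht : t ∈ Set.Icc 0 T) : norm2n n (u t - v) ≤ 2 * δ * exp (K * T) := by
  have hF : ∀ x, norm2n n (kuramotoField κ A x) ≤ K * norm2n n (x - v) + K * δ := fun x =>
    calc norm2n n (kuramotoField κ A x)
        ≤ norm2n n (kuramotoField κ A x - kuramotoField κ A v)
          + norm2n n (kuramotoField κ A v) := by
          simpa using norm2n_add_le (kuramotoField κ A x - kuramotoField κ A v)
            (kuramotoField κ A v)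
      _ ≤ K * norm2n n (x - v) + K * δ := by
          gcongr
          exact (norm2n_kuramotoField_sub_le hA x v).trans (by gcongr; exact norm2n_nonneg _)
  exact (norm2n_sub_le_gronwallBound hF hu h0 ht.1).trans
    (gronwallBound_le_two_mul_exp hK0 ((norm2n_nonneg _).trans h0) ht.2)

end Kuramoto

noncomputable def twistedState (n q : ℕ) (c : ℝ) : Fin n → ℝ :=
  fun x => ((q * (x : ℕ) : ℕ) : ℝ) / n + c

theorem Fin.intCast_val_add_sub_modEq {n : ℕ} [NeZero n] (a b c : Fin n) :
    (((a + b - c : Fin n) : ℕ) : ℤ) ≡ (a : ℕ) + (b : ℕ) - (c : ℕ) [ZMOD n] := by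
  rw [Fin.intCast_val_sub_eq_sub_add_ite, Fin.val_add]
  split_ifs <;> push_cast [Int.ModEq] <;> simp [Int.add_emod, Int.sub_emod, Int.emod_emod_of_dvd]

theorem sin_two_pi_mul_div_eq_of_modEq (n q : ℕ) {m m' : ℤ} (h : m ≡ m' [ZMOD n]) :
    sin (2 * π * q * m / n) = sin (2 * π * q * m' / n) := by
  obtain ⟨k, hk⟩ := h.dvd
  rcases eq_or_ne n 0 with rfl | hn
  · simp
  have hm' : (m' : ℝ) = m + n * k := by
    rw [← sub_eq_iff_eq_add']; exact_mod_cast hk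
  rw [hm', show 2 * π * q * (m + n * k) / n = 2 * π * q * m / n + (q * k : ℤ) * (2 * π) by
    push_cast; field_simp]
  exact (sin_add_int_mul_two_pi _ _).symm

theorem sum_sin_twistedState_sub_eq_zero (n q : ℕ) (c : ℝ) (i : Fin n) :
    ∑ j, sin (2 * π * (twistedState n q c j - twistedState n q c i)) = 0 := by
  rcases n.eq_zero_or_pos with rfl | hn
  · simp
  have : NeZero n := ⟨hn.ne'⟩
  set θ : Fin n → ℝ := fun j => sin (2 * π * q * ((j : ℕ) - (i : ℕ) : ℤ) / n)
  have hθ : ∀ j, sin (2 * π * (twistedState n q c j - twistedState n q c i)) = θ j := by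
    intro j
    simp only [θ, twistedState]; push_cast; ring_nf
  -- the reflection `j ↦ 2i - j` of `ℤ/n` reverses the sign of every term
  have hreflect : ∀ j, -θ j = θ (i + i - j) := by
    intro j
    have hmod :
        (((i + i - j : Fin n) : ℕ) - (i : ℕ) : ℤ) ≡ -((j : ℕ) - (i : ℕ)) [ZMOD n] := by
      convert (Fin.intCast_val_add_sub_modEq i i j).sub_right ((i : ℕ) : ℤ) using 1; ring
    simp only [θ]
    rw [sin_two_pi_mul_div_eq_of_modEq n q hmod, ← sin_neg]
    push_cast; ring_nf
  simp_rw [hθ]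
  have hsum := Fintype.sum_equiv (Equiv.subLeft (i + i)) (fun j => -θ j) θ hreflect
  rw [Finset.sum_neg_distrib] at hsum
  linarith

section Probability

open ProbabilityTheory

variable {Ω : Type*} [MeasurableSpace Ω] {μ : Measure Ω}

theorem integral_eq_measureReal_of_zero_or_one {X : Ω → ℝ} (hX : Measurable X)
    (h01 : ∀ ω, X ω = 0 ∨ X ω = 1) : ∫ ω, X ω ∂μ = μ.real {ω | X ω = 1} := by
  have hS : MeasurableSet {ω | X ω = 1} := hX (measurableSet_singleton 1)
  rw [← integral_indicator_one hS]
  congr 1 with ω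
  rcases h01 ω with h | h <;> simp [h]

theorem memLp_of_zero_or_one [IsFiniteMeasure μ] {X : Ω → ℝ} (hX : Measurable X)
    (h01 : ∀ ω, X ω = 0 ∨ X ω = 1) (q : ENNReal) : MemLp X q μ :=
  MemLp.of_bound hX.aestronglyMeasurable 1
    (ae_of_all _ fun ω => by rcases h01 ω with h | h <;> simp [h])

theorem measure_le_le_ofReal_div_sq_of_integral_sq_le [IsFiniteMeasure μ] {Y : Ω → ℝ}
    {C η : ℝ} (hη : 0 < η) (hY0 : ∀ ω, 0 ≤ Y ω) (hY : Integrable (fun ω => Y ω ^ 2) μ)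
    (hC : ∫ ω, Y ω ^ 2 ∂μ ≤ C) :
    μ {ω | η ≤ Y ω} ≤ ENNReal.ofReal (C / η ^ 2) := by
  have hset : {ω | η ≤ Y ω} = {ω | η ^ 2 ≤ Y ω ^ 2} := by
    ext ω; simp [pow_le_pow_iff_left₀ hη.le (hY0 ω)]
  have hmarkov :=
    mul_meas_ge_le_integral_of_nonneg (ae_of_all _ fun ω => sq_nonneg (Y ω)) hY (η ^ 2)
  rw [hset, ← ofReal_measureReal]
  exact ENNReal.ofReal_le_ofReal (by rw [le_div_iff₀ (by positivity)]; linarith)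

theorem integral_sq_sum_mul_le_of_pairwise_indepFun [IsProbabilityMeasure μ] {ι : Type*}
    {s : Finset ι} {X : ι → Ω → ℝ} {p : ℝ} {w : ι → ℝ}
    (hX : ∀ j ∈ s, Measurable (X j)) (h01 : ∀ j ∈ s, ∀ ω, X j ω = 0 ∨ X j ω = 1)
    (hmean : ∀ j ∈ s, ∫ ω, X j ω ∂μ = p)
    (hind : Set.Pairwise s fun j k => IndepFun (X j) (X k) μ) (hw : ∑ j ∈ s, w j = 0) :
    ∫ ω, (∑ j ∈ s, X j ω * w j) ^ 2 ∂μ ≤ p * ∑ j ∈ s, w j ^ 2 := by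
  set Y : ι → Ω → ℝ := fun j ω => X j ω * w j
  have hY : ∀ j ∈ s, MemLp (Y j) 2 μ := fun j hj =>
    (memLp_of_zero_or_one (hX j hj) (h01 j hj) 2).mul_const (w j)
  have hmean0 : ∫ ω, ∑ j ∈ s, Y j ω ∂μ = 0 := by
    rw [integral_finsetSum _ fun j hj => (hY j hj).integrable one_le_two]
    simp only [Y, integral_mul_const]
    rw [Finset.sum_congr rfl fun j hj => by rw [hmean j hj], ← Finset.mul_sum, hw, mul_zero]
  have hsq : ∀ j ∈ s, ∫ ω, X j ω ^ 2 ∂μ = p := fun j hj => by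
    rw [← hmean j hj]
    congr 1 with ω
    rcases h01 j hj ω with h | h <;> simp [h]
  calc ∫ ω, (∑ j ∈ s, Y j ω) ^ 2 ∂μ
      = variance (∑ j ∈ s, Y j) μ := by
        rw [variance_of_integral_eq_zero]
        · simp only [Finset.sum_apply]
        · exact (memLp_finsetSum' s hY).aestronglyMeasurable.aemeasurable
        · simpa only [Finset.sum_apply] using hmean0
    _ = ∑ j ∈ s, variance (X j) μ * w j ^ 2 := by
        rw [IndepFun.variance_sum hY fun j hj k hk hjk => (hind hj hk hjk).comp
          (measurable_id.mul_const _) (measurable_id.mul_const _)]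
        exact Finset.sum_congr rfl fun j _ => variance_mul_const _ _ _
    _ ≤ ∑ j ∈ s, p * w j ^ 2 := by
        refine Finset.sum_le_sum fun j hj => mul_le_mul_of_nonneg_right ?_ (sq_nonneg _)
        exact (variance_le_expectation_sq (hX j hj).aestronglyMeasurable).trans_eq (hsq j hj)
    _ = p * ∑ j ∈ s, w j ^ 2 := (Finset.mul_sum _ _ _).symm

theorem apply_eq_apply_min_max {ι β : Type*} [LinearOrder ι] {a : ι → ι → β}
    (hsymm : ∀ i j, a i j = a j i) (i j : ι) : a i j = a (min i j) (max i j) := by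
  rcases le_total i j with h | h
  · rw [min_eq_left h, max_eq_right h]
  · rw [min_eq_right h, max_eq_left h, hsymm]

variable {n : ℕ}

structure IsErdosRenyiAdjacency (μ : Measure Ω) (p : ℝ) (a : Fin n → Fin n → Ω → ℝ) :
    Prop where
  measurable : ∀ i j, Measurable (a i j)
  symm : ∀ i j ω, a i j ω = a j i ω
  diag : ∀ i ω, a i i ω = 0
  zero_or_one : ∀ i j ω, a i j ω = 0 ∨ a i j ω = 1
  prob_eq_one : ∀ i j, i < j → μ {ω | a i j ω = 1} = ENNReal.ofReal p
  iIndepFun : iIndepFun (fun e : {e : Fin n × Fin n // e.1 < e.2} => a e.1.1 e.1.2) μ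

namespace IsErdosRenyiAdjacency

variable {p : ℝ} {a : Fin n → Fin n → Ω → ℝ}

theorem abs_le_one (ha : IsErdosRenyiAdjacency μ p a) (i j : Fin n) (ω : Ω) :
    |a i j ω| ≤ 1 := by
  rcases ha.zero_or_one i j ω with h | h <;> simp [h]

theorem indepFun (ha : IsErdosRenyiAdjacency μ p a) {i j k : Fin n}
    (hj : j ≠ i) (hk : k ≠ i) (hjk : j ≠ k) : IndepFun (a i j) (a i k) μ := by
  have hne : (⟨(min i j, max i j), min_lt_max.2 hj.symm⟩ : {e : Fin n × Fin n // e.1 < e.2})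
      ≠ ⟨(min i k, max i k), min_lt_max.2 hk.symm⟩ := by
    simp only [ne_eq, Subtype.mk.injEq, Prod.mk.injEq, Fin.ext_iff, Fin.coe_min, Fin.coe_max]
    omega
  rw [apply_eq_apply_min_max (fun i j => funext (ha.symm i j)) i j,
    apply_eq_apply_min_max (fun i j => funext (ha.symm i j)) i k]
  exact ha.iIndepFun.indepFun hne

theorem integral_eq (ha : IsErdosRenyiAdjacency μ p a) (hp : 0 ≤ p) {i j : Fin n}
    (hij : i ≠ j) : ∫ ω, a i j ω ∂μ = p := by
  rw [integral_eq_measureReal_of_zero_or_one (ha.measurable i j) (ha.zero_or_one i j),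
    apply_eq_apply_min_max (fun i j => funext (ha.symm i j)), measureReal_def,
    ha.prob_eq_one _ _ (min_lt_max.2 hij), ENNReal.toReal_ofReal hp]

theorem memLp_sum_mul [IsFiniteMeasure μ] (ha : IsErdosRenyiAdjacency μ p a) (i : Fin n)
    (w : Fin n → ℝ) : MemLp (fun ω => ∑ j, a i j ω * w j) 2 μ :=
  memLp_finsetSum _ fun j _ =>
    (memLp_of_zero_or_one (ha.measurable i j) (ha.zero_or_one i j) 2).mul_const (w j)

theorem integral_sq_sum_mul_le [IsProbabilityMeasure μ] (ha : IsErdosRenyiAdjacency μ p a)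
    (hp : 0 ≤ p) (i : Fin n) {w : Fin n → ℝ} (hw1 : ∀ j, |w j| ≤ 1) (hwi : w i = 0)
    (hw : ∑ j, w j = 0) : ∫ ω, (∑ j, a i j ω * w j) ^ 2 ∂μ ≤ n * p := by
  have hrow : ∀ ω, ∑ j, a i j ω * w j = ∑ j ∈ Finset.univ.erase i, a i j ω * w j :=
    fun ω => (Finset.sum_erase _ (by simp [ha.diag])).symm
  have hw' : ∑ j ∈ Finset.univ.erase i, w j = 0 := by rw [Finset.sum_erase _ hwi, hw]
  simp_rw [hrow]
  calc _ ≤ p * ∑ j ∈ Finset.univ.erase i, w j ^ 2 :=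
        integral_sq_sum_mul_le_of_pairwise_indepFun (fun j _ => ha.measurable i j)
          (fun j _ => ha.zero_or_one i j)
          (fun j hj => ha.integral_eq hp (Finset.ne_of_mem_erase hj).symm)
          (fun j hj k hk hjk => ha.indepFun (Finset.ne_of_mem_erase hj)
            (Finset.ne_of_mem_erase hk) hjk) hw'
    _ ≤ p * ∑ j, w j ^ 2 := mul_le_mul_of_nonneg_left (Finset.sum_le_sum_of_subset_of_nonneg
        (Finset.erase_subset _ _) fun _ _ _ => sq_nonneg _) hp
    _ ≤ p * ∑ _j : Fin n, 1 := by
        gcongr with j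
        exact sq_le_one_iff_abs_le_one _ |>.2 (hw1 j)
    _ = n * p := by simp [mul_comm]

theorem integrable_sq_norm2n_kuramotoField [IsFiniteMeasure μ]
    (ha : IsErdosRenyiAdjacency μ p a) (κ : ℝ) (v : Fin n → ℝ) :
    Integrable (fun ω => norm2n n (kuramotoField κ (fun i j => a i j ω) v) ^ 2) μ := by
  simp_rw [sq_norm2n, kuramotoField]
  exact (integrable_finsetSum _ fun i _ =>
    ((ha.memLp_sum_mul i _).const_mul κ).integrable_sq).const_mul _

theorem integral_sq_norm2n_kuramotoField_twistedState_le [IsProbabilityMeasure μ]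
    (ha : IsErdosRenyiAdjacency μ p a) (hp : 0 ≤ p) (κ : ℝ) (q : ℕ) (c : ℝ) :
    ∫ ω, norm2n n (kuramotoField κ (fun i j => a i j ω) (twistedState n q c)) ^ 2 ∂μ
      ≤ κ ^ 2 * n * p := by
  set w : Fin n → Fin n → ℝ := fun i j =>
    sin (2 * π * (twistedState n q c j - twistedState n q c i))
  have hrow : ∀ i, ∫ ω, (κ * ∑ j, a i j ω * w i j) ^ 2 ∂μ ≤ κ ^ 2 * (n * p) := by
    intro i
    simp_rw [mul_pow]
    rw [integral_const_mul]
    exact mul_le_mul_of_nonneg_left (ha.integral_sq_sum_mul_le hp i (fun j => abs_sin_le_one _)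
      (by simp [w]) (sum_sin_twistedState_sub_eq_zero n q c i)) (sq_nonneg κ)
  simp_rw [sq_norm2n, kuramotoField]
  rw [integral_const_mul, integral_finsetSum _ fun i _ =>
    ((ha.memLp_sum_mul i _).const_mul κ).integrable_sq]
  calc (n : ℝ)⁻¹ * ∑ i, ∫ ω, (κ * ∑ j, a i j ω * w i j) ^ 2 ∂μ
      ≤ (n : ℝ)⁻¹ * ∑ _i : Fin n, κ ^ 2 * (n * p) := by gcongr with i; exact hrow i
    _ = κ ^ 2 * n * p := by
        rw [Finset.sum_const, Finset.card_univ, Fintype.card_fin, nsmul_eq_mul]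
        rcases eq_or_ne (n : ℝ) 0 with h | h
        · simp [h]
        · field_simp

theorem measure_le_norm2n_kuramotoField_twistedState_le [IsProbabilityMeasure μ]
    (ha : IsErdosRenyiAdjacency μ p a) (hp : 0 ≤ p) (κ : ℝ) (q : ℕ) (c : ℝ) {η : ℝ}
    (hη : 0 < η) :
    μ {ω | η ≤ norm2n n (kuramotoField κ (fun i j => a i j ω) (twistedState n q c))}
      ≤ ENNReal.ofReal (κ ^ 2 * n * p / η ^ 2) :=
  measure_le_le_ofReal_div_sq_of_integral_sq_le hη (fun _ => norm2n_nonneg _)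
    (ha.integrable_sq_norm2n_kuramotoField κ _)
    (ha.integral_sq_norm2n_kuramotoField_twistedState_le hp κ q c)

end IsErdosRenyiAdjacency

end Probability

theorem twisted_states_metastable_on_ER_general
    {Ω : Type*} [MeasurableSpace Ω] (ℙ : Measure Ω) [IsProbabilityMeasure ℙ]
    (p : ℝ) (hp : p ∈ Set.Ioo (0 : ℝ) 1)
    (α : ℕ)
    -- the adjacency matrices of G(n,p)
    (a : (n : ℕ) → Fin n → Fin n → Ω → ℝ)
    (hmeas : ∀ (n : ℕ) (i j : Fin n), Measurable (a n i j))
    (hsymm : ∀ (n : ℕ) (i j : Fin n) (ω : Ω), a n i j ω = a n j i ω)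
    (hdiag : ∀ (n : ℕ) (i : Fin n) (ω : Ω), a n i i ω = 0)
    (h01 : ∀ (n : ℕ) (i j : Fin n) (ω : Ω), a n i j ω = 0 ∨ a n i j ω = 1)
    (hbern : ∀ (n : ℕ) (i j : Fin n), i < j → ℙ {ω | a n i j ω = 1} = ENNReal.ofReal p)
    (hind : ∀ n : ℕ, ProbabilityTheory.iIndepFun
      (fun e : {e : Fin n × Fin n // e.1 < e.2} => a n e.1.1 e.1.2) ℙ) :
    ∀ ε₁ ∈ Set.Ioo (0 : ℝ) 1, ∀ ε₂ ∈ Set.Ioo (0 : ℝ) 1, ∀ T : ℝ, 0 < T →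
    ∀ q : ℕ, 1 ≤ q → ∀ c : ℝ,
    ∃ N : ℕ, ∀ n : ℕ, N ≤ n → ∃ δ > (0 : ℝ),
      ∀ u0 : Fin n → ℝ,
        norm2n n (fun x => u0 x - (((q * (x : ℕ) : ℕ) : ℝ) / n + c)) < δ →
        ∀ u : Ω → ℝ → Fin n → ℝ,
          (∀ ω : Ω, u ω 0 = u0) →
          (∀ (ω : Ω) (t : ℝ) (i : Fin n), HasDerivAt (fun s => u ω s i)
            (((-1 : ℝ) ^ α / ((n : ℝ) * p)) *
              ∑ j : Fin n, a n i j ω * Real.sin (2 * Real.pi * (u ω t j - u ω t i))) t) →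
          ℙ {ω | ∃ t ∈ Set.Icc (0 : ℝ) T,
              ε₁ < norm2n n (fun x => u ω t x - (((q * (x : ℕ) : ℕ) : ℝ) / n + c))}
            < ENNReal.ofReal ε₂ := by
  intro ε₁ hε₁ ε₂ hε₂ T _ q _ c
  have hER : ∀ n, IsErdosRenyiAdjacency ℙ p (a n) := fun n =>
    ⟨hmeas n, hsymm n, hdiag n, h01 n, hbern n, hind n⟩
  obtain ⟨hp0, -⟩ := hp
  obtain ⟨hε₁0, -⟩ := hε₁
  obtain ⟨hε₂0, -⟩ := hε₂
  set K := 4 * π / p with hK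
  set δ := ε₁ / (2 * exp (K * T)) with hδ
  obtain ⟨N, hN⟩ := exists_nat_gt (1 / (p * (K * δ) ^ 2 * ε₂))
  refine ⟨N, fun n hNn => ⟨δ, by positivity, fun u0 hu0 u hinit hode => ?_⟩⟩
  replace hNn : 1 / (p * (K * δ) ^ 2 * ε₂) < n := hN.trans_le (by exact_mod_cast hNn)
  have hn : (0 : ℝ) < n := (one_div_pos.2 (by positivity)).trans hNn
  set κ := (-1 : ℝ) ^ α / (n * p)
  have hκ : |κ| = 1 / (n * p) := by rw [abs_div, abs_neg_one_pow, abs_of_pos (by positivity)]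
  refine (measure_mono fun ω hω => ?_).trans_lt <|
    ((hER n).measure_le_norm2n_kuramotoField_twistedState_le hp0.le κ q c
      (η := K * δ) (by positivity)).trans_lt ?_
  · obtain ⟨t, ht, hlt⟩ := hω
    by_contra hsmall
    refine hlt.not_ge ((norm2n_sub_le_two_mul_exp_of_hasDerivAt_kuramotoField
      ((hER n).abs_le_one · · ω) (by positivity) ?_ (not_le.1 hsmall).le
      (fun t => hasDerivAt_pi.2 (hode ω t)) (by rw [hinit ω]; exact hu0.le) ht).trans_eq ?_)
    · exact le_of_eq (by rw [hκ, hK]; field_simp)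
    · rw [hδ]; field_simp
  · rw [ENNReal.ofReal_lt_ofReal_iff hε₂0, ← sq_abs, hκ, div_lt_iff₀ (by positivity)]
    rw [div_lt_iff₀ (by positivity)] at hNn
    field_simp
    linarith

/-- Theorem 7.4, metastability of twisted states: for the Kuramoto model
on the Erdős–Rényi graph `G(n,p)`, for all `ε₁, ε₂ ∈ (0,1)`, `T > 0` and integer `q ≥ 1`
there is `N = N(ε₁,ε₂)` such that for all `n ≥ N` there is `δ = δ(n,ε₂) > 0` with:
if `‖u_n(0) - u_n^{(q)}‖_{2,n} < δ` then
`P{ max_{t∈[0,T]} ‖u_n(t) - u_n^{(q)}‖_{2,n} > ε₁ } < ε₂`. -/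
theorem twisted_states_metastable_on_ER
    {Ω : Type*} [MeasurableSpace Ω] (ℙ : Measure Ω) [IsProbabilityMeasure ℙ]
    (p : ℝ) (hp : p ∈ Set.Ioo (0 : ℝ) 1)
    (α : ℕ) (hα : α = 0 ∨ α = 1)
    -- the adjacency matrices of G(n,p)
    (a : (n : ℕ) → Fin n → Fin n → Ω → ℝ)
    (hmeas : ∀ (n : ℕ) (i j : Fin n), Measurable (a n i j))
    (hsymm : ∀ (n : ℕ) (i j : Fin n) (ω : Ω), a n i j ω = a n j i ω)
    (hdiag : ∀ (n : ℕ) (i : Fin n) (ω : Ω), a n i i ω = 0)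
    (h01 : ∀ (n : ℕ) (i j : Fin n) (ω : Ω), a n i j ω = 0 ∨ a n i j ω = 1)
    (hbern : ∀ (n : ℕ) (i j : Fin n), i < j → ℙ {ω | a n i j ω = 1} = ENNReal.ofReal p)
    (hind : ∀ n : ℕ, ProbabilityTheory.iIndepFun
      (fun e : {e : Fin n × Fin n // e.1 < e.2} => a n e.1.1 e.1.2) ℙ) :
    ∀ ε₁ ∈ Set.Ioo (0 : ℝ) 1, ∀ ε₂ ∈ Set.Ioo (0 : ℝ) 1, ∀ T : ℝ, 0 < T →
    ∀ q : ℕ, 1 ≤ q → ∀ c : ℝ,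
    ∃ N : ℕ, ∀ n : ℕ, N ≤ n → ∃ δ > (0 : ℝ),
      ∀ u0 : Fin n → ℝ,
        norm2n n (fun x => u0 x - (((q * (x : ℕ) : ℕ) : ℝ) / n + c)) < δ →
        ∀ u : Ω → ℝ → Fin n → ℝ,
          (∀ ω : Ω, u ω 0 = u0) →
          (∀ (ω : Ω) (t : ℝ) (i : Fin n), HasDerivAt (fun s => u ω s i)
            (((-1 : ℝ) ^ α / ((n : ℝ) * p)) *
              ∑ j : Fin n, a n i j ω * Real.sin (2 * Real.pi * (u ω t j - u ω t i))) t) →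
          ℙ {ω | ∃ t ∈ Set.Icc (0 : ℝ) T,
              ε₁ < norm2n n (fun x => u ω t x - (((q * (x : ℕ) : ℕ) : ℝ) / n + c))}
            < ENNReal.ofReal ε₂ :=
  twisted_states_metastable_on_ER_general ℙ p hp α a hmeas hsymm hdiag h01 hbern hind
end
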